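/- arXiv:2404.01660 — 5 statements merged into one kernel-verified Lean document; each statement's English description precedes it below -/
import Mathlib

section
/- Let U ⊆ ℝⁿ be open, let k ≥ 1, and let u₁, …, u_k : U → ℝ be C² functions that are positive everywhere; set u = u₁⋯u_k and β_k = (k+1)/(2k). If at a point x ∈ U one has Σ_{i=1}^{k} Δuᵢ(x)/uᵢ(x) + Σ_{1 ≤ i < j ≤ k} ⟪∇(log uᵢ)(x), ∇(log uⱼ)(x)⟫ < c for some real number c, then Δ(log u)(x) < c − β_k · ‖∇(log u)(x)‖². -/
/-- The Euclidean Laplacian: sum of the second partial derivatives along the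
coordinate directions. -/
noncomputable def eLaplacian {n : ℕ} (f : EuclideanSpace ℝ (Fin n) → ℝ)
    (x : EuclideanSpace ℝ (Fin n)) : ℝ :=
  ∑ i, fderiv ℝ (fun y => fderiv ℝ f y (EuclideanSpace.single i 1)) x
    (EuclideanSpace.single i 1)

/-!
Near `x` we have `log u = ∑ᵢ log uᵢ` and `Δ log uᵢ = Δuᵢ / uᵢ - ‖vᵢ‖²` with `vᵢ = ∇ log uᵢ`,
so `Δ log u = ∑ᵢ Δuᵢ / uᵢ - ∑ᵢ ‖vᵢ‖²`, and by hypothesis this is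
`< c - (∑ᵢ ‖vᵢ‖² + ∑_{i<j} ⟪vᵢ, vⱼ⟫) = c - (‖∑ᵢ vᵢ‖² + ∑ᵢ ‖vᵢ‖²) / 2`.
Cauchy–Schwarz, `‖∑ᵢ vᵢ‖² ≤ k ∑ᵢ ‖vᵢ‖²`, bounds the last bracket below by `β_k ‖∑ᵢ vᵢ‖²`,
and `∑ᵢ vᵢ = ∇ log u`.
-/

open Finset Filter Topology

section
variable {ι : Type*} [Fintype ι] [LinearOrder ι]

theorem Finset.sum_sum_eq_sum_add_two_nsmul_sum_lt {M : Type*} [AddCommMonoid M]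
    (g : ι → ι → M) (hg : ∀ i j, g i j = g j i) :
    ∑ i, ∑ j, g i j = ∑ i, g i i + 2 • ∑ i, ∑ j ∈ univ.filter (fun j => i < j), g i j := by
  have hsplit : ∀ i, ∑ j, g i j = g i i + (∑ j ∈ univ.filter (fun j => i < j), g i j
      + ∑ j ∈ univ.filter (fun j => j < i), g i j) := by
    intro i
    rw [Fintype.sum_eq_add_sum_compl i, ← sum_filter_add_sum_filter_not {i}ᶜ (fun j => i < j)]
    congr 2 <;> refine sum_congr ?_ fun _ _ => rfl <;> ext j
    · simpa using fun h => h.ne'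
    · simp only [mem_filter, mem_compl, mem_singleton, mem_univ, true_and, not_lt]
      exact ⟨fun h => lt_of_le_of_ne h.2 h.1, fun h => ⟨h.ne, h.le⟩⟩
  have hswap : ∑ i, ∑ j ∈ univ.filter (fun j => j < i), g i j
      = ∑ j, ∑ i ∈ univ.filter (fun i => j < i), g j i := by
    rw [sum_comm' (t' := univ) (s' := fun j => univ.filter (fun i => j < i)) (by simp)]
    simp_rw [hg]
  simp_rw [hsplit, sum_add_distrib, hswap, two_nsmul]

omit [LinearOrder ι] in
theorem norm_sum_sq_le_card_mul_sum_norm_sq {F : Type*} [SeminormedAddCommGroup F] (v : ι → F) :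
    ‖∑ i, v i‖ ^ 2 ≤ Fintype.card ι * ∑ i, ‖v i‖ ^ 2 :=
  (pow_le_pow_left₀ (norm_nonneg _) (norm_sum_le _ _) 2).trans sq_sum_le_card_mul_sum_sq

theorem norm_sum_sq_eq_sum_norm_sq_add_two_mul_sum_inner {F : Type*} [NormedAddCommGroup F]
    [InnerProductSpace ℝ F] (v : ι → F) :
    ‖∑ i, v i‖ ^ 2 = ∑ i, ‖v i‖ ^ 2
      + 2 * ∑ i, ∑ j ∈ univ.filter (fun j => i < j), (inner ℝ (v i) (v j) : ℝ) := by
  rw [← real_inner_self_eq_norm_sq, sum_inner]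
  simp_rw [inner_sum]
  rw [sum_sum_eq_sum_add_two_nsmul_sum_lt _ fun i j => real_inner_comm (v j) (v i)]
  simp only [real_inner_self_eq_norm_sq, nsmul_eq_mul, Nat.cast_ofNat]

theorem card_add_one_div_two_card_mul_norm_sum_sq_le {F : Type*} [NormedAddCommGroup F]
    [InnerProductSpace ℝ F] (v : ι → F) :
    (Fintype.card ι + 1) / (2 * Fintype.card ι) * ‖∑ i, v i‖ ^ 2
      ≤ ∑ i, ‖v i‖ ^ 2 + ∑ i, ∑ j ∈ univ.filter (fun j => i < j), (inner ℝ (v i) (v j) : ℝ) := by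
  have hexpand := norm_sum_sq_eq_sum_norm_sq_add_two_mul_sum_inner v
  have hCS := norm_sum_sq_le_card_mul_sum_norm_sq v
  have hA : 0 ≤ ∑ i, ‖v i‖ ^ 2 := by positivity
  rcases (Fintype.card ι).eq_zero_or_pos with hcard | hcard
  · -- the coefficient is the junk value `1 / 0 = 0`
    simp only [hcard, CharP.cast_eq_zero, mul_zero, div_zero, zero_mul]
    nlinarith [sq_nonneg ‖∑ i, v i‖]
  · have hk : (0 : ℝ) < Fintype.card ι := by exact_mod_cast hcard
    rw [div_mul_eq_mul_div, div_le_iff₀ (by positivity)]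
    nlinarith

end

section
variable {E F : Type*} [NormedAddCommGroup E] [NormedSpace ℝ E] [NormedAddCommGroup F]
  [NormedSpace ℝ F] {x : E}

theorem ContDiffAt.differentiableAt_fderiv_apply {f : E → F} (hf : ContDiffAt ℝ 2 f x) (e : E) :
    DifferentiableAt ℝ (fun y => fderiv ℝ f y e) x :=
  ((hf.fderiv_right (m := 1) (by norm_num)).differentiableAt one_ne_zero).clm_apply
    (differentiableAt_const e)

theorem fderiv_fderiv_apply_fun_sum {ι : Type*} {s : Finset ι} {h : ι → E → F}
    (hh : ∀ i ∈ s, ContDiffAt ℝ 2 (h i) x) (e : E) :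
    fderiv ℝ (fun y => fderiv ℝ (fun z => ∑ i ∈ s, h i z) y e) x e
      = ∑ i ∈ s, fderiv ℝ (fun y => fderiv ℝ (h i) y e) x e := by
  have hdiff : ∀ᶠ y in 𝓝 x, ∀ i ∈ s, DifferentiableAt ℝ (h i) y :=
    (eventually_all_finset s).2 fun i hi =>
      ((hh i hi).eventually (by norm_num)).mono fun y hy => hy.differentiableAt (by norm_num)
  have hfirst : (fun y => fderiv ℝ (fun z => ∑ i ∈ s, h i z) y e)
      =ᶠ[𝓝 x] fun y => ∑ i ∈ s, fderiv ℝ (h i) y e := by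
    filter_upwards [hdiff] with y hy
    rw [fderiv_fun_sum hy, _root_.sum_apply]
  rw [hfirst.fderiv_eq, fderiv_fun_sum fun i hi => (hh i hi).differentiableAt_fderiv_apply e,
    _root_.sum_apply]

theorem fderiv_fderiv_apply_log {f : E → ℝ} (hf : ContDiffAt ℝ 2 f x) (hx : f x ≠ 0) (e : E) :
    fderiv ℝ (fun y => fderiv ℝ (fun z => Real.log (f z)) y e) x e
      = fderiv ℝ (fun y => fderiv ℝ f y e) x e / f x
        - (fderiv ℝ (fun z => Real.log (f z)) x e) ^ 2 := by
  have hdiff : ∀ᶠ y in 𝓝 x, DifferentiableAt ℝ f y ∧ f y ≠ 0 :=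
    ((hf.eventually (by norm_num)).mono fun y hy => hy.differentiableAt (by norm_num)).and
      (hf.continuousAt.eventually_ne hx)
  have hfirst : (fun y => fderiv ℝ (fun z => Real.log (f z)) y e)
      =ᶠ[𝓝 x] fun y => (f y)⁻¹ * fderiv ℝ f y e := by
    filter_upwards [hdiff] with y ⟨hd, hy⟩
    rw [(hd.hasFDerivAt.log hy).fderiv]
    rfl
  have hf' := (hf.differentiableAt (by norm_num)).hasFDerivAt
  have hprod : HasFDerivAt (fun y => (f y)⁻¹ * fderiv ℝ f y e) _ x :=
    ((hasDerivAt_inv hx).comp_hasFDerivAt x hf').fun_mul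
      (hf.differentiableAt_fderiv_apply e).hasFDerivAt
  rw [hfirst.fderiv_eq, hprod.fderiv, (hf'.log hx).fderiv]
  simp only [Function.comp_apply, neg_smul, smul_neg, add_apply, smul_apply, smul_eq_mul, neg_apply]
  ring

end

section
variable {n : ℕ} {x : EuclideanSpace ℝ (Fin n)}

theorem Filter.EventuallyEq.eLaplacian_eq {f g : EuclideanSpace ℝ (Fin n) → ℝ}
    (h : f =ᶠ[𝓝 x] g) : eLaplacian f x = eLaplacian g x := by
  refine sum_congr rfl fun i _ => ?_
  congr 1
  refine Filter.EventuallyEq.fderiv_eq ?_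
  filter_upwards [h.eventuallyEq_nhds] with y hy
  rw [hy.fderiv_eq]

theorem eLaplacian_fun_sum {ι : Type*} {s : Finset ι} {h : ι → EuclideanSpace ℝ (Fin n) → ℝ}
    (hh : ∀ i ∈ s, ContDiffAt ℝ 2 (h i) x) :
    eLaplacian (fun y => ∑ i ∈ s, h i y) x = ∑ i ∈ s, eLaplacian (h i) x := by
  simp only [eLaplacian, fderiv_fderiv_apply_fun_sum hh]
  exact sum_comm

theorem norm_gradient_sq_eq_sum_sq_fderiv (g : EuclideanSpace ℝ (Fin n) → ℝ) :
    ‖gradient g x‖ ^ 2 = ∑ i, (fderiv ℝ g x (EuclideanSpace.single i 1)) ^ 2 := by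
  rw [EuclideanSpace.real_norm_sq_eq]
  refine sum_congr rfl fun i _ => ?_
  rw [← inner_gradient_left, EuclideanSpace.inner_single_right]
  simp

theorem eLaplacian_log {f : EuclideanSpace ℝ (Fin n) → ℝ} (hf : ContDiffAt ℝ 2 f x)
    (hx : f x ≠ 0) :
    eLaplacian (fun y => Real.log (f y)) x
      = eLaplacian f x / f x - ‖gradient (fun y => Real.log (f y)) x‖ ^ 2 := by
  simp only [eLaplacian, fderiv_fderiv_apply_log hf hx, norm_gradient_sq_eq_sum_sq_fderiv,
    sum_sub_distrib, sum_div]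

end

theorem gradient_fun_sum {F : Type*} [NormedAddCommGroup F] [InnerProductSpace ℝ F]
    [CompleteSpace F] {ι : Type*} {s : Finset ι} {h : ι → F → ℝ} {x : F}
    (hh : ∀ i ∈ s, DifferentiableAt ℝ (h i) x) :
    gradient (fun y => ∑ i ∈ s, h i y) x = ∑ i ∈ s, gradient (h i) x := by
  rw [gradient, fderiv_fun_sum hh, map_sum]
  rfl

theorem stmt_1_general {n : ℕ} (U : Set (EuclideanSpace ℝ (Fin n))) (hU : IsOpen U)
    (k : ℕ) (u : Fin k → EuclideanSpace ℝ (Fin n) → ℝ)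
    (hreg : ∀ i, ContDiffOn ℝ 2 (u i) U) (hpos : ∀ i, ∀ x ∈ U, 0 < u i x)
    (c : ℝ) (x : EuclideanSpace ℝ (Fin n)) (hx : x ∈ U)
    (h : ∑ i, eLaplacian (u i) x / u i x
        + ∑ i, ∑ j ∈ Finset.univ.filter (fun j => i < j),
            (inner ℝ (gradient (fun y => Real.log (u i y)) x)
                   (gradient (fun y => Real.log (u j y)) x) : ℝ) < c) :
    eLaplacian (fun y => Real.log (∏ i, u i y)) x
      < c - (((k : ℝ) + 1) / (2 * (k : ℝ))) *
          ‖gradient (fun y => Real.log (∏ i, u i y)) x‖ ^ 2 := by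
  have hC : ∀ i, ContDiffAt ℝ 2 (u i) x := fun i => (hreg i).contDiffAt (hU.mem_nhds hx)
  have hne : ∀ i, u i x ≠ 0 := fun i => (hpos i x hx).ne'
  have hlogC : ∀ i ∈ univ, ContDiffAt ℝ 2 (fun y => Real.log (u i y)) x :=
    fun i _ => (hC i).log (hne i)
  have hlog_prod : (fun y => Real.log (∏ i, u i y)) =ᶠ[𝓝 x] fun y => ∑ i, Real.log (u i y) := by
    filter_upwards [hU.mem_nhds hx] with y hy
    exact Real.log_prod fun i _ => (hpos i y hy).ne'
  rw [hlog_prod.eLaplacian_eq, hlog_prod.gradient_eq, eLaplacian_fun_sum hlogC,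
    gradient_fun_sum fun i hi => (hlogC i hi).differentiableAt (by norm_num)]
  simp only [eLaplacian_log (hC _) (hne _), sum_sub_distrib]
  have hβ := card_add_one_div_two_card_mul_norm_sum_sq_le
    fun i => gradient (fun y => Real.log (u i y)) x
  rw [Fintype.card_fin] at hβ
  linarith

/-- the pointwise differential inequality
`Δ(log u) < c − β_k ‖∇(log u)‖²` for `u = u₁ ⋯ u_k`, `β_k = (k+1)/(2k)`. -/
theorem stmt_1 {n : ℕ} (U : Set (EuclideanSpace ℝ (Fin n))) (hU : IsOpen U)
    (k : ℕ) (hk : 1 ≤ k) (u : Fin k → EuclideanSpace ℝ (Fin n) → ℝ)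
    (hreg : ∀ i, ContDiffOn ℝ 2 (u i) U) (hpos : ∀ i, ∀ x ∈ U, 0 < u i x)
    (c : ℝ) (x : EuclideanSpace ℝ (Fin n)) (hx : x ∈ U)
    (h : ∑ i, eLaplacian (u i) x / u i x
        + ∑ i, ∑ j ∈ Finset.univ.filter (fun j => i < j),
            (inner ℝ (gradient (fun y => Real.log (u i y)) x)
                   (gradient (fun y => Real.log (u j y)) x) : ℝ) < c) :
    eLaplacian (fun y => Real.log (∏ i, u i y)) x
      < c - (((k : ℝ) + 1) / (2 * (k : ℝ))) *
          ‖gradient (fun y => Real.log (∏ i, u i y)) x‖ ^ 2 :=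
  stmt_1_general U hU k u hreg hpos c x hx h
end

section
/- For every c > 0 there exist a real number D₀ > 1 and a smooth function h : (−D₀, D₀) → ℝ such that: h is antitone (non-increasing); h(t) → +∞ as t → −D₀ from the right; h(t) → −∞ as t → D₀ from the left; and for all t ∈ (−D₀, D₀), 2·h′(t) + h(t)² + c·𝟙_{[−1,1]}(t) ≥ 0, where 𝟙_{[−1,1]} is the indicator function of the interval [−1,1] ⊆ ℝ. -/
open Real Filter Set

namespace Stmt2Aux

variable (c : ℝ)

/-- steepness parameter -/
noncomputable def kk (c : ℝ) : ℝ := 4 + 16 / c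
/-- height parameter -/
noncomputable def AA (c : ℝ) : ℝ := 1 + 16 * kk c / c
/-- the "smoothed tent" profile -/
noncomputable def qq (c t : ℝ) : ℝ := AA c - (1 / kk c) * Real.log (Real.cosh (kk c * t))
/-- the auxiliary big number `exp (k A)` -/
noncomputable def EE (c : ℝ) : ℝ := Real.exp (kk c * AA c)
/-- the endpoint -/
noncomputable def DD (c : ℝ) : ℝ :=
  (1 / kk c) * Real.log (EE c + Real.sqrt (EE c ^ 2 - 1))
/-- the barrier function -/
noncomputable def hh (c t : ℝ) : ℝ :=
  -4 * Real.sinh (kk c * t) / (Real.cosh (kk c * t) * qq c t)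

variable (hc : 0 < c)
include hc

lemma kk_pos : 0 < kk c := by
  have : 0 < 16 / c := by positivity
  unfold kk; linarith

lemma kk_ge_four : 4 ≤ kk c := by
  have : 0 < 16 / c := by positivity
  unfold kk; linarith

lemma AA_gt_one : 1 < AA c := by
  have h1 := kk_pos c hc
  have : 0 < 16 * kk c / c := by positivity
  unfold AA; linarith

lemma EE_gt_one : 1 < EE c := by
  have h1 := kk_pos c hc
  have h2 := AA_gt_one c hc
  have : 0 < kk c * AA c := by nlinarith
  calc (1:ℝ) = Real.exp 0 := by simp
  _ < EE c := Real.exp_lt_exp.mpr this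

lemma cosh_kDD : Real.cosh (kk c * DD c) = EE c := by
  have hE := EE_gt_one c hc
  have hk := kk_pos c hc
  have hs : Real.sqrt (EE c ^ 2 - 1) ^ 2 = EE c ^ 2 - 1 := by
    rw [Real.sq_sqrt]; nlinarith
  have hspos : 0 ≤ Real.sqrt (EE c ^ 2 - 1) := Real.sqrt_nonneg _
  have hpos : 0 < EE c + Real.sqrt (EE c ^ 2 - 1) := by nlinarith
  have hmul : kk c * DD c = Real.log (EE c + Real.sqrt (EE c ^ 2 - 1)) := by
    unfold DD; field_simp
  rw [hmul, Real.cosh_eq, Real.exp_log hpos, Real.exp_neg, Real.exp_log hpos]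
  have hinv : (EE c + Real.sqrt (EE c ^ 2 - 1))⁻¹ = EE c - Real.sqrt (EE c ^ 2 - 1) := by
    apply inv_eq_of_mul_eq_one_right
    nlinarith
  rw [hinv]; ring

lemma DD_pos : 0 < DD c := by
  have hk := kk_pos c hc
  have hE := EE_gt_one c hc
  have hpos : (1:ℝ) < EE c + Real.sqrt (EE c ^ 2 - 1) := by
    have := Real.sqrt_nonneg (EE c ^ 2 - 1); linarith
  have hlog : 0 < Real.log (EE c + Real.sqrt (EE c ^ 2 - 1)) := Real.log_pos hpos
  unfold DD; positivity

lemma DD_gt_one : 1 < DD c := by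
  have hk := kk_pos c hc
  have hA := AA_gt_one c hc
  have hD := DD_pos c hc
  have h1 : Real.cosh (kk c * 1) < Real.cosh (kk c * DD c) := by
    rw [cosh_kDD c hc]
    calc Real.cosh (kk c * 1) ≤ Real.exp (kk c * 1) := by
          rw [Real.cosh_eq]
          have : Real.exp (-(kk c * 1)) ≤ Real.exp (kk c * 1) := by
            apply Real.exp_le_exp.mpr; nlinarith
          linarith
    _ < EE c := by
          apply Real.exp_lt_exp.mpr; nlinarith
  have h2 : |kk c * 1| < |kk c * DD c| := Real.cosh_lt_cosh.mp h1
  rw [abs_of_pos (by linarith : (0:ℝ) < kk c * 1),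
      abs_of_pos (by positivity : (0:ℝ) < kk c * DD c)] at h2
  exact lt_of_mul_lt_mul_left (by linarith) hk.le

lemma qq_eval_DD : qq c (DD c) = 0 := by
  have hk := kk_pos c hc
  unfold qq
  rw [cosh_kDD c hc]
  unfold EE
  rw [Real.log_exp]
  field_simp
  ring

lemma qq_eval_negDD : qq c (-DD c) = 0 := by
  have := qq_eval_DD c hc
  unfold qq at *
  rw [mul_neg, Real.cosh_neg]
  exact this

lemma qq_pos {t : ℝ} (ht : t ∈ Set.Ioo (-DD c) (DD c)) : 0 < qq c t := by
  have hk := kk_pos c hc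
  have habs : |kk c * t| < |kk c * DD c| := by
    rw [abs_mul, abs_mul, abs_of_pos hk, abs_of_pos (DD_pos c hc)]
    apply mul_lt_mul_of_pos_left _ hk
    rw [abs_lt]; exact ⟨ht.1, ht.2⟩
  have hcosh : Real.cosh (kk c * t) < Real.cosh (kk c * DD c) :=
    Real.cosh_lt_cosh.mpr habs
  have hlog : Real.log (Real.cosh (kk c * t)) < Real.log (Real.cosh (kk c * DD c)) :=
    Real.log_lt_log (Real.cosh_pos _) hcosh
  have h0 : qq c (DD c) = 0 := qq_eval_DD c hc
  unfold qq at *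
  have : (1 / kk c) * Real.log (Real.cosh (kk c * t))
      < (1 / kk c) * Real.log (Real.cosh (kk c * DD c)) := by
    apply mul_lt_mul_of_pos_left hlog; positivity
  linarith

/-- upper bound for `qq` -/
lemma qq_le_AA (t : ℝ) : qq c t ≤ AA c := by
  have hk := kk_pos c hc
  have h1 : 0 ≤ Real.log (Real.cosh (kk c * t)) :=
    Real.log_nonneg (Real.one_le_cosh _)
  have : 0 ≤ (1 / kk c) * Real.log (Real.cosh (kk c * t)) := by positivity
  unfold qq; linarith

/-- lower bound for `qq` on `[-1,1]` -/
lemma qq_ge {t : ℝ} (ht : |t| ≤ 1) : AA c - 1 ≤ qq c t := by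
  have hk := kk_pos c hc
  have h1 : Real.cosh (kk c * t) ≤ Real.exp (kk c) := by
    calc Real.cosh (kk c * t) ≤ Real.cosh (kk c * 1) := by
          apply Real.cosh_le_cosh.mpr
          rw [abs_mul, abs_mul, abs_of_pos hk]
          apply mul_le_mul_of_nonneg_left _ hk.le
          simpa using ht
    _ ≤ Real.exp (kk c) := by
          rw [Real.cosh_eq, mul_one]
          have : Real.exp (-kk c) ≤ Real.exp (kk c) := by
            apply Real.exp_le_exp.mpr; linarith
          linarith
  have h2 : Real.log (Real.cosh (kk c * t)) ≤ kk c := by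
    calc Real.log (Real.cosh (kk c * t)) ≤ Real.log (Real.exp (kk c)) :=
          Real.log_le_log (Real.cosh_pos _) h1
    _ = kk c := Real.log_exp _
  have h3 : (1 / kk c) * Real.log (Real.cosh (kk c * t)) ≤ (1 / kk c) * kk c := by
    apply mul_le_mul_of_nonneg_left h2; positivity
  have h4 : (1 / kk c) * kk c = 1 := by field_simp
  unfold qq; rw [h4] at h3; linarith

/-- the key inequality: `sinh k ^ 2 ≥ k * A`. -/
lemma sinh_kk_sq : kk c * AA c ≤ Real.sinh (kk c) ^ 2 := by
  have hk := kk_pos c hc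
  have hk4 := kk_ge_four c hc
  set k := kk c with hkdef
  have hc16 : 16 / c = k - 4 := by rw [hkdef]; unfold kk; ring
  have hA : AA c = 1 + k * (k - 4) := by
    unfold AA
    rw [← hkdef, ← hc16]; ring
  -- exp lower bound
  have hexp : 1 + k + k ^ 2 / 2 + k ^ 3 / 6 ≤ Real.exp k := by
    have := Real.sum_le_exp_of_nonneg hk.le 4
    rw [Finset.sum_range_succ, Finset.sum_range_succ, Finset.sum_range_succ,
      Finset.sum_range_succ, Finset.sum_range_zero] at this
    norm_num [Nat.factorial] at this
    linarith
  have hexpneg : Real.exp (-k) ≤ 1 := by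
    rw [Real.exp_le_one_iff]; linarith
  have hsinh : (k + k ^ 2 / 2 + k ^ 3 / 6) / 2 ≤ Real.sinh k := by
    rw [Real.sinh_eq]; linarith
  have hX : (0:ℝ) ≤ (k + k ^ 2 / 2 + k ^ 3 / 6) / 2 := by positivity
  have hsq : ((k + k ^ 2 / 2 + k ^ 3 / 6) / 2) ^ 2 ≤ Real.sinh k ^ 2 := by
    apply pow_le_pow_left₀ hX hsinh
  rw [hA]
  nlinarith [sq_nonneg k, sq_nonneg (k - 4), mul_nonneg (mul_nonneg hk.le hk.le) (by linarith : (0:ℝ) ≤ k - 4)]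

/-- derivative of `qq` -/
lemma hasDerivAt_qq (t : ℝ) :
    HasDerivAt (qq c) (-(Real.sinh (kk c * t) / Real.cosh (kk c * t))) t := by
  have hk := kk_pos c hc
  have h1 : HasDerivAt (fun t => kk c * t) (kk c) t := by
    simpa using (hasDerivAt_id t).const_mul (kk c)
  have h2 : HasDerivAt (fun t => Real.cosh (kk c * t)) (Real.sinh (kk c * t) * kk c) t :=
    (Real.hasDerivAt_cosh (kk c * t)).comp t h1
  have h3 : HasDerivAt (fun t => Real.log (Real.cosh (kk c * t)))
      ((Real.cosh (kk c * t))⁻¹ * (Real.sinh (kk c * t) * kk c)) t := by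
    have := (Real.hasDerivAt_log (x := Real.cosh (kk c * t))
      (ne_of_gt (Real.cosh_pos _))).comp t h2
    exact this
  have h4 : HasDerivAt (qq c)
      (-((1 / kk c) * ((Real.cosh (kk c * t))⁻¹ * (Real.sinh (kk c * t) * kk c)))) t :=
    (h3.const_mul (1 / kk c)).const_sub (AA c)
  convert h4 using 1
  have := (Real.cosh_pos (kk c * t)).ne'
  field_simp

/-- derivative of `hh` -/
lemma hasDerivAt_hh {t : ℝ} (hq : qq c t ≠ 0) :
    HasDerivAt (hh c)
      ((-4 * kk c * qq c t - 4 * Real.sinh (kk c * t) ^ 2)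
        / (Real.cosh (kk c * t) ^ 2 * qq c t ^ 2)) t := by
  have hk := kk_pos c hc
  have hch := Real.cosh_pos (kk c * t)
  have h1 : HasDerivAt (fun t => kk c * t) (kk c) t := by
    simpa using (hasDerivAt_id t).const_mul (kk c)
  have hu : HasDerivAt (fun t => -4 * Real.sinh (kk c * t))
      (-4 * (Real.cosh (kk c * t) * kk c)) t :=
    (((Real.hasDerivAt_sinh (kk c * t)).comp t h1)).const_mul (-4)
  have hcosh : HasDerivAt (fun t => Real.cosh (kk c * t)) (Real.sinh (kk c * t) * kk c) t :=
    (Real.hasDerivAt_cosh (kk c * t)).comp t h1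
  have hv : HasDerivAt (fun t => Real.cosh (kk c * t) * qq c t)
      (Real.sinh (kk c * t) * kk c * qq c t
        + Real.cosh (kk c * t) * -(Real.sinh (kk c * t) / Real.cosh (kk c * t))) t :=
    hcosh.mul (hasDerivAt_qq c hc t)
  have hvne : Real.cosh (kk c * t) * qq c t ≠ 0 := mul_ne_zero hch.ne' hq
  have hdiv : HasDerivAt (hh c) _ t := hu.div hv hvne
  convert hdiv using 1
  have hchne := hch.ne'
  rw [div_eq_div_iff (by positivity) (by positivity)]
  have hid : Real.cosh (kk c * t) ^ 2 - Real.sinh (kk c * t) ^ 2 = 1 :=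
    Real.cosh_sq_sub_sinh_sq _
  field_simp
  linear_combination (kk c * qq c t) * hid

/-- continuity of qq -/
lemma continuous_qq : Continuous (qq c) := by
  unfold qq
  apply continuous_const.sub
  apply Continuous.mul continuous_const
  exact (Real.continuous_cosh.comp (continuous_const.mul continuous_id)).log
    (fun t => (Real.cosh_pos _).ne')

/-- smoothness -/
lemma contDiffOn_hh : ContDiffOn ℝ (⊤ : ℕ∞) (hh c) (Set.Ioo (-DD c) (DD c)) := by
  intro t ht
  have hq := (qq_pos c hc ht).ne'
  apply ContDiffAt.contDiffWithinAt
  have hlin : ContDiff ℝ (⊤ : ℕ∞) fun s : ℝ => kk c * s := contDiff_const.mul contDiff_id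
  refine ContDiffAt.div ?_ ?_ (mul_ne_zero (Real.cosh_pos _).ne' hq)
  · exact (contDiff_const.mul (Real.contDiff_sinh.comp hlin)).contDiffAt
  · refine ContDiffAt.mul (Real.contDiff_cosh.comp hlin).contDiffAt ?_
    have hlog : ContDiffAt ℝ (⊤ : ℕ∞) (fun s => Real.log (Real.cosh (kk c * s))) t := by
      have := ((Real.contDiffAt_log (x := Real.cosh (kk c * t))).mpr (Real.cosh_pos _).ne').comp t
        (Real.contDiff_cosh.comp hlin).contDiffAt
      exact this
    exact contDiffAt_const.sub (contDiffAt_const.mul hlog)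

/-- pointwise formula splitting `hh` as a product -/
lemma hh_eq_mul : hh c = fun t =>
    (-4 * Real.sinh (kk c * t) / Real.cosh (kk c * t)) * (qq c t)⁻¹ := by
  funext t
  unfold hh
  rw [← div_div, div_eq_mul_inv]

lemma tendsto_qq_DD : Filter.Tendsto (qq c) (nhdsWithin (DD c) (Set.Iio (DD c)))
    (nhdsWithin 0 (Set.Ioi 0)) := by
  rw [tendsto_nhdsWithin_iff]
  constructor
  · have h1 : Filter.Tendsto (qq c) (nhdsWithin (DD c) (Set.Iio (DD c))) (nhds (qq c (DD c))) :=
      ((continuous_qq c hc).continuousAt.tendsto).mono_left nhdsWithin_le_nhds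
    rwa [qq_eval_DD c hc] at h1
  · have hmem : Set.Ioi (-DD c) ∈ nhds (DD c) :=
      Ioi_mem_nhds (by linarith [DD_pos c hc])
    filter_upwards [self_mem_nhdsWithin, eventually_nhdsWithin_of_eventually_nhds
      (eventually_of_mem hmem (fun x hx => hx))] with x hx1 hx2
    exact qq_pos c hc ⟨hx2, hx1⟩

lemma tendsto_qq_negDD : Filter.Tendsto (qq c) (nhdsWithin (-DD c) (Set.Ioi (-DD c)))
    (nhdsWithin 0 (Set.Ioi 0)) := by
  rw [tendsto_nhdsWithin_iff]
  constructor
  · have h1 : Filter.Tendsto (qq c) (nhdsWithin (-DD c) (Set.Ioi (-DD c)))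
        (nhds (qq c (-DD c))) :=
      ((continuous_qq c hc).continuousAt.tendsto).mono_left nhdsWithin_le_nhds
    rwa [qq_eval_negDD c hc] at h1
  · have hmem : Set.Iio (DD c) ∈ nhds (-DD c) :=
      Iio_mem_nhds (by linarith [DD_pos c hc])
    filter_upwards [self_mem_nhdsWithin, eventually_nhdsWithin_of_eventually_nhds
      (eventually_of_mem hmem (fun x hx => hx))] with x hx1 hx2
    exact qq_pos c hc ⟨hx1, hx2⟩

lemma continuous_num : Continuous (fun t => -4 * Real.sinh (kk c * t) / Real.cosh (kk c * t)) := by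
  apply Continuous.div
  · exact continuous_const.mul (Real.continuous_sinh.comp (continuous_const.mul continuous_id))
  · exact Real.continuous_cosh.comp (continuous_const.mul continuous_id)
  · exact fun t => (Real.cosh_pos _).ne'

lemma tendsto_hh_atBot : Filter.Tendsto (hh c) (nhdsWithin (DD c) (Set.Iio (DD c)))
    Filter.atBot := by
  rw [hh_eq_mul c hc]
  have hinv : Filter.Tendsto (fun t => (qq c t)⁻¹) (nhdsWithin (DD c) (Set.Iio (DD c)))
      Filter.atTop := tendsto_inv_nhdsGT_zero.comp (tendsto_qq_DD c hc)
  have hnum : Filter.Tendsto (fun t => -4 * Real.sinh (kk c * t) / Real.cosh (kk c * t))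
      (nhdsWithin (DD c) (Set.Iio (DD c)))
      (nhds (-4 * Real.sinh (kk c * DD c) / Real.cosh (kk c * DD c))) :=
    ((continuous_num c hc).continuousAt.tendsto).mono_left nhdsWithin_le_nhds
  have hL : -4 * Real.sinh (kk c * DD c) / Real.cosh (kk c * DD c) < 0 := by
    apply div_neg_of_neg_of_pos _ (Real.cosh_pos _)
    have : 0 < Real.sinh (kk c * DD c) :=
      Real.sinh_pos_iff.mpr (mul_pos (kk_pos c hc) (DD_pos c hc))
    linarith
  exact hnum.neg_mul_atTop hL hinv

lemma tendsto_hh_atTop : Filter.Tendsto (hh c) (nhdsWithin (-DD c) (Set.Ioi (-DD c)))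
    Filter.atTop := by
  rw [hh_eq_mul c hc]
  have hinv : Filter.Tendsto (fun t => (qq c t)⁻¹) (nhdsWithin (-DD c) (Set.Ioi (-DD c)))
      Filter.atTop := tendsto_inv_nhdsGT_zero.comp (tendsto_qq_negDD c hc)
  have hnum : Filter.Tendsto (fun t => -4 * Real.sinh (kk c * t) / Real.cosh (kk c * t))
      (nhdsWithin (-DD c) (Set.Ioi (-DD c)))
      (nhds (-4 * Real.sinh (kk c * -DD c) / Real.cosh (kk c * -DD c))) :=
    ((continuous_num c hc).continuousAt.tendsto).mono_left nhdsWithin_le_nhds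
  have hL : 0 < -4 * Real.sinh (kk c * -DD c) / Real.cosh (kk c * -DD c) := by
    apply div_pos _ (Real.cosh_pos _)
    have h1 : Real.sinh (kk c * -DD c) < 0 := by
      have hneg : kk c * -DD c < 0 := by
        have h1 := kk_pos c hc; have h2 := DD_pos c hc; nlinarith
      have := Real.sinh_lt_sinh.mpr hneg
      simpa using this
    linarith
  exact hnum.pos_mul_atTop hL hinv

end Stmt2Aux

/-- existence of the barrier profile function `h` on `(−D₀, D₀)`
with `D₀ > 1`, antitone, blowing up to `±∞` at the endpoints, and satisfying
`2h′ + h² + c·𝟙_{[−1,1]} ≥ 0`. -/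
theorem stmt_2 (c : ℝ) (hc : 0 < c) :
    ∃ (D₀ : ℝ) (h : ℝ → ℝ), 1 < D₀ ∧
      ContDiffOn ℝ (⊤ : ℕ∞) h (Set.Ioo (-D₀) D₀) ∧
      AntitoneOn h (Set.Ioo (-D₀) D₀) ∧
      Filter.Tendsto h (nhdsWithin (-D₀) (Set.Ioi (-D₀))) Filter.atTop ∧
      Filter.Tendsto h (nhdsWithin D₀ (Set.Iio D₀)) Filter.atBot ∧
      ∀ t ∈ Set.Ioo (-D₀) D₀,
        0 ≤ 2 * deriv h t + h t ^ 2
            + c * Set.indicator (Set.Icc (-1 : ℝ) 1) (fun _ => (1 : ℝ)) t := by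
  open Stmt2Aux in
  refine ⟨DD c, hh c, DD_gt_one c hc, contDiffOn_hh c hc, ?_, tendsto_hh_atTop c hc,
    tendsto_hh_atBot c hc, ?_⟩
  · -- antitone
    apply antitoneOn_of_deriv_nonpos (convex_Ioo _ _) (contDiffOn_hh c hc).continuousOn
    · rw [interior_Ioo]
      exact (contDiffOn_hh c hc).differentiableOn (by simp)
    · intro x hx
      rw [interior_Ioo] at hx
      have hq := qq_pos c hc hx
      rw [(hasDerivAt_hh c hc hq.ne').deriv]
      apply div_nonpos_of_nonpos_of_nonneg
      · nlinarith [kk_pos c hc, sq_nonneg (Real.sinh (kk c * x))]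
      · positivity
  · -- the differential inequality
    intro t ht
    have hq := qq_pos c hc ht
    have hk := kk_pos c hc
    have hch := Real.cosh_pos (kk c * t)
    have hch1 := Real.one_le_cosh (kk c * t)
    rw [(hasDerivAt_hh c hc hq.ne').deriv]
    have hhval : hh c t ^ 2 = 16 * Real.sinh (kk c * t) ^ 2
        / (Real.cosh (kk c * t) ^ 2 * qq c t ^ 2) := by
      unfold hh
      rw [div_pow]
      congr 1
      · ring
      · ring
    rw [hhval]
    by_cases hmem : t ∈ Set.Icc (-1 : ℝ) 1
    · rw [Set.indicator_of_mem hmem]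
      have hq1 : AA c - 1 ≤ qq c t := qq_ge c hc (abs_le.mpr ⟨hmem.1, hmem.2⟩)
      have hA1 : 16 * kk c ≤ c * qq c t := by
        have : AA c - 1 = 16 * kk c / c := by unfold AA; ring
        rw [this] at hq1
        calc 16 * kk c = c * (16 * kk c / c) := by field_simp
        _ ≤ c * qq c t := by apply mul_le_mul_of_nonneg_left hq1 hc.le
      have heq : 2 * ((-4 * kk c * qq c t - 4 * Real.sinh (kk c * t) ^ 2)
            / (Real.cosh (kk c * t) ^ 2 * qq c t ^ 2))
          + 16 * Real.sinh (kk c * t) ^ 2 / (Real.cosh (kk c * t) ^ 2 * qq c t ^ 2)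
          = (8 * Real.sinh (kk c * t) ^ 2 - 8 * kk c * qq c t)
            / (Real.cosh (kk c * t) ^ 2 * qq c t ^ 2) := by
        field_simp
        ring
      rw [mul_one, heq]
      have hfrac : -c ≤ (8 * Real.sinh (kk c * t) ^ 2 - 8 * kk c * qq c t)
          / (Real.cosh (kk c * t) ^ 2 * qq c t ^ 2) := by
        rw [le_div_iff₀ (by positivity)]
        have hcq : 8 * kk c * qq c t ≤ c * (qq c t * qq c t) := by
          nlinarith
        nlinarith [sq_nonneg (Real.sinh (kk c * t)),
          mul_le_mul_of_nonneg_left hcq (by nlinarith : (0:ℝ) ≤ Real.cosh (kk c * t) ^ 2 - 1),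
          sq_nonneg (qq c t)]
      linarith
    · rw [Set.indicator_of_notMem hmem, mul_zero, add_zero]
      have habs : 1 < |t| := by
        simp only [Set.mem_Icc, not_and_or, not_le] at hmem
        rcases hmem with h | h
        · rw [abs_of_neg (by linarith)]; linarith
        · rw [abs_of_pos (by linarith)]; linarith
      have hcosh_le : Real.cosh (kk c) ≤ Real.cosh (kk c * t) := by
        apply Real.cosh_le_cosh.mpr
        rw [abs_mul, abs_of_pos hk]
        calc kk c = kk c * 1 := by rw [mul_one]
        _ ≤ kk c * |t| := by apply mul_le_mul_of_nonneg_left habs.le hk.le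
      have hs2 : Real.sinh (kk c) ^ 2 ≤ Real.sinh (kk c * t) ^ 2 := by
        rw [Real.sinh_sq, Real.sinh_sq]
        have h1 := Real.one_le_cosh (kk c)
        nlinarith
      have hkey := sinh_kk_sq c hc
      have hqA : kk c * qq c t ≤ kk c * AA c :=
        mul_le_mul_of_nonneg_left (qq_le_AA c hc t) hk.le
      have heq : 2 * ((-4 * kk c * qq c t - 4 * Real.sinh (kk c * t) ^ 2)
            / (Real.cosh (kk c * t) ^ 2 * qq c t ^ 2))
          + 16 * Real.sinh (kk c * t) ^ 2 / (Real.cosh (kk c * t) ^ 2 * qq c t ^ 2)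
          = (8 * Real.sinh (kk c * t) ^ 2 - 8 * kk c * qq c t)
            / (Real.cosh (kk c * t) ^ 2 * qq c t ^ 2) := by
        field_simp
        ring
      rw [heq]
      apply div_nonneg _ (by positivity)
      linarith
end

section
/- Let U ⊆ ℝ² be open, let u : U → ℝ be a C² function that is positive everywhere, let f : U → ℝ be continuous, and let β > 0. Assume that Δ(log u)(x) < f(x) − β·‖∇(log u)(x)‖² for all x ∈ U. Then for every smooth function φ : ℝ² → ℝ that is not identically zero and whose (compact) support is contained in U, one has ∫_U (‖∇φ‖² + β·f·φ²) dx > 0. -/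
open MeasureTheory Set Filter Topology Manifold


lemma fderiv_eq_inner_gradient {n : ℕ} {g : EuclideanSpace ℝ (Fin n) → ℝ}
    {x : EuclideanSpace ℝ (Fin n)} (h : DifferentiableAt ℝ g x) (v : EuclideanSpace ℝ (Fin n)) :
    fderiv ℝ g x v = inner ℝ (gradient g x) v := by
  rw [h.hasGradientAt.hasFDerivAt.fderiv]
  simp [InnerProductSpace.toDual_apply_apply]

lemma norm_gradient_sq {n : ℕ} {g : EuclideanSpace ℝ (Fin n) → ℝ}
    {x : EuclideanSpace ℝ (Fin n)} (h : DifferentiableAt ℝ g x) :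
    ‖gradient g x‖ ^ 2 = ∑ i, (fderiv ℝ g x (EuclideanSpace.single i 1)) ^ 2 := by
  have h1 : ∀ i, fderiv ℝ g x (EuclideanSpace.single i 1) = gradient g x i := by
    intro i
    rw [fderiv_eq_inner_gradient h]
    rw [EuclideanSpace.inner_single_right]; simp
  simp_rw [h1]
  rw [EuclideanSpace.norm_eq]
  rw [Real.sq_sqrt (by positivity)]
  simp [sq_abs]

lemma fderiv_sq_apply {n : ℕ} {φ : EuclideanSpace ℝ (Fin n) → ℝ} (hφ : Differentiable ℝ φ)
    (x v : EuclideanSpace ℝ (Fin n)) :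
    fderiv ℝ (fun y => φ y ^ 2) x v = 2 * φ x * fderiv ℝ φ x v := by
  have : (fun y => φ y ^ 2) = fun y => φ y * φ y := by ext y; ring
  rw [this, fderiv_fun_mul (hφ x) (hφ x)]
  simp; ring

lemma cutoff_exists {U : Set (EuclideanSpace ℝ (Fin 2))} (hU : IsOpen U)
    {K : Set (EuclideanSpace ℝ (Fin 2))} (hK : IsCompact K) (hKU : K ⊆ U) :
    ∃ χ : EuclideanSpace ℝ (Fin 2) → ℝ, ContDiff ℝ (⊤ : ℕ∞) χ ∧
      (∃ V : Set (EuclideanSpace ℝ (Fin 2)), IsOpen V ∧ K ⊆ V ∧ V ⊆ U ∧ ∀ x ∈ V, χ x = 1) ∧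
      HasCompactSupport χ ∧ tsupport χ ⊆ U := by
  obtain ⟨t, ht_cpt, hKt, htU⟩ := exists_compact_between hK hU hKU
  obtain ⟨χ, hχ1, hχ0, _⟩ :=
    exists_contMDiffMap_one_nhds_of_subset_interior (𝓘(ℝ, EuclideanSpace ℝ (Fin 2)))
      (n := (⊤ : ℕ∞)) (s := K) (t := t) hK.isClosed hKt
  obtain ⟨V, hVopen, hKV, hV1⟩ := eventually_nhdsSet_iff_exists.mp hχ1
  have hsupp : tsupport χ ⊆ t := by
    apply closure_minimal _ ht_cpt.isClosed
    intro x hx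
    by_contra hxt
    exact hx (hχ0 x hxt)
  refine ⟨χ, ?_, ⟨V ∩ U, hVopen.inter hU, subset_inter hKV hKU, inter_subset_right,
      fun x hx => hV1 x hx.1⟩, ?_, hsupp.trans htU⟩
  · exact contMDiff_iff_contDiff.mp χ.contMDiff
  · exact HasCompactSupport.of_support_subset_isCompact ht_cpt
      (subset_trans subset_closure hsupp)


/-- from the pointwise inequality `Δ(log u) < f − β‖∇(log u)‖²` on `U`,
the Schrödinger-type operator `−Δ + β f` is positive:
`∫_U (‖∇φ‖² + β f φ²) > 0` for every nonzero smooth `φ` compactly supported in `U`. -/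

theorem stmt_3 (U : Set (EuclideanSpace ℝ (Fin 2))) (hU : IsOpen U)
    (u : EuclideanSpace ℝ (Fin 2) → ℝ) (hu : ContDiffOn ℝ 2 u U)
    (hupos : ∀ x ∈ U, 0 < u x)
    (f : EuclideanSpace ℝ (Fin 2) → ℝ) (hf : ContinuousOn f U)
    (β : ℝ) (hβ : 0 < β)
    (hineq : ∀ x ∈ U, eLaplacian (fun y => Real.log (u y)) x
        < f x - β * ‖gradient (fun y => Real.log (u y)) x‖ ^ 2)
    (φ : EuclideanSpace ℝ (Fin 2) → ℝ) (hφ : ContDiff ℝ (⊤ : ℕ∞) φ)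
    (hφsupp : HasCompactSupport φ) (hφU : tsupport φ ⊆ U) (hφne : φ ≠ 0) :
    0 < ∫ x in U, (‖gradient φ x‖ ^ 2 + β * f x * φ x ^ 2) := by
  classical
  have hφd : Differentiable ℝ φ := hφ.differentiable (by simp)
  have hφc : Continuous φ := hφd.continuous
  set e : Fin 2 → EuclideanSpace ℝ (Fin 2) := fun i => EuclideanSpace.single i 1 with he
  set w : EuclideanSpace ℝ (Fin 2) → ℝ := fun y => Real.log (u y) with hw
  have hwC2 : ContDiffOn ℝ 2 w U := hu.log (fun x hx => (hupos x hx).ne')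
  set K : Set (EuclideanSpace ℝ (Fin 2)) := tsupport φ with hK
  obtain ⟨χ, hχs, ⟨V, hVopen, hKV, hVU, hV1⟩, hχcs, hχU⟩ := cutoff_exists hU hφsupp hφU
  set wt : EuclideanSpace ℝ (Fin 2) → ℝ := fun x => χ x * w x with hwt
  -- wt is C²
  have hχs2 : ContDiff ℝ 2 χ := hχs.of_le (by norm_cast)
  have hwtC2 : ContDiff ℝ 2 wt := by
    rw [contDiff_iff_contDiffAt]
    intro x
    by_cases hx : x ∈ U
    · exact (hχs2.contDiffAt).mul (hwC2.contDiffAt (hU.mem_nhds hx))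
    · have hx' : x ∉ tsupport χ := fun h => hx (hχU h)
      have hev : wt =ᶠ[𝓝 x] (fun _ => (0:ℝ)) := by
        filter_upwards [(isOpen_compl_iff.mpr (isClosed_tsupport χ)).mem_nhds hx'] with y hy
        simp [hwt, image_eq_zero_of_notMem_tsupport hy]
      exact (contDiffAt_const (c := (0:ℝ))).congr_of_eventuallyEq hev
  have hwtd : Differentiable ℝ wt := hwtC2.differentiable (by norm_num)
  -- wt agrees with w near points of V
  have hVev : ∀ x ∈ V, wt =ᶠ[𝓝 x] w := by
    intro x hx
    filter_upwards [hVopen.mem_nhds hx] with y hy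
    simp [hwt, hV1 y hy]
  -- first derivatives
  set q : Fin 2 → EuclideanSpace ℝ (Fin 2) → ℝ := fun i x => fderiv ℝ wt x (e i) with hq
  have hwt_fd : ContDiff ℝ 1 (fderiv ℝ wt) := hwtC2.fderiv_right (by norm_num)
  have hqC1 : ∀ i, ContDiff ℝ 1 (q i) := fun i =>
    (ContinuousLinearMap.apply ℝ ℝ (e i)).contDiff.comp hwt_fd
  have hqd : ∀ i, Differentiable ℝ (q i) := fun i => (hqC1 i).differentiable one_ne_zero
  have hqc : ∀ i, Continuous (q i) := fun i => (hqC1 i).continuous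
  have hq'c : ∀ i, Continuous (fun x => fderiv ℝ (q i) x (e i)) := fun i =>
    (ContinuousLinearMap.apply ℝ ℝ (e i)).continuous.comp ((hqC1 i).continuous_fderiv one_ne_zero)
  set p : Fin 2 → EuclideanSpace ℝ (Fin 2) → ℝ := fun i x => fderiv ℝ φ x (e i) with hp
  have hφ_fd : ContDiff ℝ 1 (fderiv ℝ φ) := hφ.fderiv_right (m := 1) (WithTop.coe_le_coe.mpr le_top)
  have hpc : ∀ i, Continuous (p i) := fun i =>
    (ContinuousLinearMap.apply ℝ ℝ (e i)).continuous.comp hφ_fd.continuous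
  -- vanishing off K
  have hφ0 : ∀ x, x ∉ K → φ x = 0 := fun x hx => image_eq_zero_of_notMem_tsupport hx
  have hφev0 : ∀ x, x ∉ K → φ =ᶠ[𝓝 x] (fun _ => (0:ℝ)) := by
    intro x hx
    filter_upwards [(isOpen_compl_iff.mpr (isClosed_tsupport φ)).mem_nhds hx] with y hy
    exact image_eq_zero_of_notMem_tsupport hy
  have hp0 : ∀ x, x ∉ K → ∀ i, p i x = 0 := by
    intro x hx i
    have : fderiv ℝ φ x = fderiv ℝ (fun _ => (0:ℝ)) x := (hφev0 x hx).fderiv_eq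
    simp [hp, this]
  have hgradφ0 : ∀ x, x ∉ K → gradient φ x = 0 := by
    intro x hx
    rw [(hφev0 x hx).gradient_eq]
    exact gradient_const x (0:ℝ)
  -- integrability helper
  have intg : ∀ (A : EuclideanSpace ℝ (Fin 2) → ℝ), Continuous A → (∀ x, x ∉ K → A x = 0) →
      Integrable A volume := fun A hc h0 =>
    hc.integrable_of_hasCompactSupport (HasCompactSupport.intro hφsupp h0)
  -- integration by parts, coordinatewise
  have hsq : ∀ (i : Fin 2) x, fderiv ℝ (fun y => φ y ^ 2) x (e i) = 2 * φ x * p i x := fun i x =>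
    fderiv_sq_apply hφd x (e i)
  have int1 : ∀ i, Integrable (fun x => φ x ^ 2 * fderiv ℝ (q i) x (e i)) volume := fun i =>
    intg _ ((hφc.pow 2).mul (hq'c i)) (fun x hx => by simp [hφ0 x hx])
  have int2 : ∀ i, Integrable (fun x => (2 * φ x * p i x) * q i x) volume := fun i =>
    intg _ (((continuous_const.mul hφc).mul (hpc i)).mul (hqc i))
      (fun x hx => by simp [hφ0 x hx])
  have int3 : ∀ i, Integrable (fun x => φ x ^ 2 * q i x) volume := fun i =>
    intg _ ((hφc.pow 2).mul (hqc i)) (fun x hx => by simp [hφ0 x hx])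
  have ibp : ∀ i, ∫ x, φ x ^ 2 * fderiv ℝ (q i) x (e i)
      = - ∫ x, (2 * φ x * p i x) * q i x := by
    intro i
    have int2' : Integrable (fun x => fderiv ℝ (fun y => φ y ^ 2) x (e i) * q i x) volume := by
      have : (fun x => fderiv ℝ (fun y => φ y ^ 2) x (e i) * q i x)
          = fun x => (2 * φ x * p i x) * q i x := by
        funext x; rw [hsq i x]
      rw [this]; exact int2 i
    have h2 := integral_mul_fderiv_eq_neg_fderiv_mul_of_integrable
      (μ := volume) (f := fun y => φ y ^ 2) (g := q i) (v := e i)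
      int2' (int1 i) (int3 i) (fun x _ => (hφd.pow 2) x) (fun x _ => hqd i x)
    rw [h2]
    congr 1
    apply integral_congr_ae
    filter_upwards with x
    rw [hsq i x]
  -- Laplacian-type quantity for wt
  set D : EuclideanSpace ℝ (Fin 2) → ℝ := fun x => ∑ i, fderiv ℝ (q i) x (e i) with hD
  have hDc : Continuous D := continuous_finset_sum _ (fun i _ => hq'c i)
  -- key integral identity: ∫ φ² D = - ∫ 2 φ Σ p q
  have key1 : ∫ x, φ x ^ 2 * D x = - ∫ x, 2 * φ x * ∑ i, p i x * q i x := by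
    have l1 : (fun x => φ x ^ 2 * D x) = fun x => ∑ i, φ x ^ 2 * fderiv ℝ (q i) x (e i) := by
      funext x; rw [hD]; rw [Finset.mul_sum]
    have l2 : (fun x => 2 * φ x * ∑ i, p i x * q i x)
        = fun x => ∑ i, (2 * φ x * p i x) * q i x := by
      funext x; rw [Finset.mul_sum]; congr 1; funext i; ring
    rw [l1, l2, integral_finset_sum _ (fun i _ => int1 i),
      integral_finset_sum _ (fun i _ => int2 i), ← Finset.sum_neg_distrib]
    exact Finset.sum_congr rfl (fun i _ => ibp i)
  -- the square term
  set T : EuclideanSpace ℝ (Fin 2) → ℝ := fun x => ∑ i, (p i x - β * (φ x * q i x)) ^ 2 with hT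
  have hTnn : ∀ x, 0 ≤ T x := fun x => Finset.sum_nonneg (fun i _ => sq_nonneg _)
  have hTc : Continuous T := by
    apply continuous_finset_sum
    intro i _
    exact ((hpc i).sub (continuous_const.mul (hφc.mul (hqc i)))).pow 2
  have hT0 : ∀ x, x ∉ K → T x = 0 := by
    intro x hx
    simp only [hT]
    apply Finset.sum_eq_zero
    intro i _
    rw [hp0 x hx i, hφ0 x hx]
    ring
  -- L: the main nonnegative part
  set L : EuclideanSpace ℝ (Fin 2) → ℝ :=
    fun x => (∑ i, p i x ^ 2) + β * (φ x ^ 2 * (D x + β * ∑ i, q i x ^ 2)) with hL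
  have hLc : Continuous L := by
    apply Continuous.add
    · exact continuous_finset_sum _ (fun i _ => (hpc i).pow 2)
    · exact continuous_const.mul ((hφc.pow 2).mul
        (hDc.add (continuous_const.mul (continuous_finset_sum _ (fun i _ => (hqc i).pow 2)))))
  have hL0 : ∀ x, x ∉ K → L x = 0 := by
    intro x hx
    simp only [hL]
    rw [hφ0 x hx]
    have : ∀ i ∈ Finset.univ, p i x ^ 2 = (0:ℝ) := fun i _ => by rw [hp0 x hx i]; ring
    rw [Finset.sum_congr rfl this]
    simp
  -- pointwise : L = T + β * (φ² D + 2 φ Σ p q)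
  have hpt : ∀ x, L x = T x + β * (φ x ^ 2 * D x + 2 * φ x * ∑ i, p i x * q i x) := by
    intro x
    simp only [hL, hT, hD, Fin.sum_univ_two]
    ring
  -- ∫ L = ∫ T ≥ 0
  have intT : Integrable T volume := intg _ hTc hT0
  have intφD : Integrable (fun x => φ x ^ 2 * D x) volume :=
    intg _ ((hφc.pow 2).mul hDc) (fun x hx => by simp [hφ0 x hx])
  have intpq : Integrable (fun x => 2 * φ x * ∑ i, p i x * q i x) volume :=
    intg _ ((continuous_const.mul hφc).mul
      (continuous_finset_sum _ (fun i _ => (hpc i).mul (hqc i))))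
      (fun x hx => by simp [hφ0 x hx])
  have intL : Integrable L volume := intg _ hLc hL0
  have hIL : ∫ x, L x = ∫ x, T x := by
    have : (fun x => L x) = fun x => T x + β * (φ x ^ 2 * D x + 2 * φ x * ∑ i, p i x * q i x) := by
      funext x; exact hpt x
    have intcomb : Integrable
        (fun x => β * (φ x ^ 2 * D x + 2 * φ x * ∑ i, p i x * q i x)) volume := by
      exact (intφD.add intpq).const_mul β
    rw [this, integral_add intT intcomb, integral_const_mul β _,
      integral_add intφD intpq, key1]
    ring
  have hILnn : 0 ≤ ∫ x, L x := by
    rw [hIL]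
    exact integral_nonneg hTnn
  -- identify D and Σ q² with eLaplacian w and ‖∇w‖² on V
  have hDe : ∀ x ∈ V, eLaplacian w x = D x := by
    intro x hx
    simp only [eLaplacian, hD, he]
    apply Finset.sum_congr rfl
    intro i _
    have hev : (fun y => fderiv ℝ w y (EuclideanSpace.single i 1)) =ᶠ[𝓝 x] (q i) := by
      filter_upwards [hVopen.mem_nhds hx] with y hy
      simp only [hq, he]
      rw [(hVev y hy).symm.fderiv_eq]
    rw [hev.fderiv_eq]
  have hgradw : ∀ x ∈ V, ‖gradient w x‖ ^ 2 = ∑ i, q i x ^ 2 := by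
    intro x hx
    have hdiff : DifferentiableAt ℝ w x := ((hVev x hx).differentiableAt_iff).mp (hwtd x)
    rw [norm_gradient_sq hdiff]
    apply Finset.sum_congr rfl
    intro i _
    rw [(hVev x hx).symm.fderiv_eq]
  -- the strictly positive part A
  set A : EuclideanSpace ℝ (Fin 2) → ℝ :=
    fun x => β * (φ x ^ 2 * f x - φ x ^ 2 * (D x + β * ∑ i, q i x ^ 2)) with hA
  have hAkey : ∀ x, x ∈ K → 0 < f x - (D x + β * ∑ i, q i x ^ 2) := by
    intro x hx
    have hxV : x ∈ V := hKV hx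
    have hxU : x ∈ U := hVU hxV
    have h1 := hineq x hxU
    rw [hDe x hxV, hgradw x hxV] at h1
    linarith
  have hAnn : ∀ x, 0 ≤ A x := by
    intro x
    by_cases hx : x ∈ K
    · simp only [hA]
      have heq : φ x ^ 2 * f x - φ x ^ 2 * (D x + β * ∑ i, q i x ^ 2)
          = φ x ^ 2 * (f x - (D x + β * ∑ i, q i x ^ 2)) := by ring
      rw [heq]
      exact mul_nonneg hβ.le (mul_nonneg (sq_nonneg _) (hAkey x hx).le)
    · simp [hA, hφ0 x hx]
  have hA0 : ∀ x, x ∉ K → A x = 0 := fun x hx => by simp [hA, hφ0 x hx]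
  have hφ2fc : Continuous (fun x => φ x ^ 2 * f x) := by
    rw [continuous_iff_continuousAt]
    intro x
    by_cases hx : x ∈ U
    · exact ((hφc.pow 2).continuousAt).mul (hf.continuousAt (hU.mem_nhds hx))
    · have hx' : x ∉ K := fun h => hx (hφU h)
      have hev : (fun _ => (0:ℝ)) =ᶠ[𝓝 x] (fun y => φ y ^ 2 * f y) := by
        filter_upwards [(isOpen_compl_iff.mpr (isClosed_tsupport φ)).mem_nhds hx'] with y hy
        simp [image_eq_zero_of_notMem_tsupport hy]
      exact continuousAt_const.congr hev
  have hAc : Continuous A := by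
    apply continuous_const.mul
    apply hφ2fc.sub
    exact (hφc.pow 2).mul (hDc.add (continuous_const.mul
      (continuous_finset_sum _ (fun i _ => (hqc i).pow 2))))
  have intA : Integrable A volume := intg _ hAc hA0
  obtain ⟨x₀, hx₀⟩ : ∃ x, φ x ≠ 0 := by
    by_contra h
    push_neg at h
    exact hφne (funext h)
  have hx₀K : x₀ ∈ K := subset_closure (Function.mem_support.mpr hx₀)
  have hApos : 0 < A x₀ := by
    simp only [hA]
    have heq : φ x₀ ^ 2 * f x₀ - φ x₀ ^ 2 * (D x₀ + β * ∑ i, q i x₀ ^ 2)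
        = φ x₀ ^ 2 * (f x₀ - (D x₀ + β * ∑ i, q i x₀ ^ 2)) := by ring
    rw [heq]
    exact mul_pos hβ (mul_pos (by positivity) (hAkey x₀ hx₀K))
  have hIA : 0 < ∫ x, A x := by
    rw [integral_pos_iff_support_of_nonneg (fun x => hAnn x) intA]
    exact (hAc.isOpen_support).measure_pos volume
      ⟨x₀, Function.mem_support.mpr (ne_of_gt hApos)⟩
  have hzero : ∀ x, x ∉ U → ‖gradient φ x‖ ^ 2 + β * f x * φ x ^ 2 = 0 := by
    intro x hx
    have hx' : x ∉ K := fun h => hx (hφU h)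
    rw [hgradφ0 x hx', hφ0 x hx']
    simp
  have hsplit : (∫ x in U, (‖gradient φ x‖ ^ 2 + β * f x * φ x ^ 2))
      = (∫ x, L x) + ∫ x, A x := by
    rw [setIntegral_eq_integral_of_forall_compl_eq_zero hzero]
    rw [← integral_add intL intA]
    apply integral_congr_ae
    filter_upwards with x
    rw [norm_gradient_sq (hφd x)]
    simp only [hL, hA, hp, hq, hD, he, Fin.sum_univ_two]
    ring
  rw [hsplit]
  linarith
end

section
/- Let U ⊆ ℝ² be open, let k ≥ 1, let u₁, …, u_k : U → ℝ be C² functions that are positive everywhere, let f : U → ℝ be continuous, and set β_k = (k+1)/(2k). Assume that for every x ∈ U, Σ_{i=1}^{k} Δuᵢ(x)/uᵢ(x) + Σ_{1 ≤ i < j ≤ k} ⟪∇(log uᵢ)(x), ∇(log uⱼ)(x)⟫ < f(x). Then for every smooth function φ : ℝ² → ℝ that is not identically zero and whose (compact) support is contained in U, one has ∫_U (‖∇φ‖² + β_k·f·φ²) dx > 0. -/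
open MeasureTheory Set Function

local notation "E2" => EuclideanSpace ℝ (Fin 2)
local notation "e" i => EuclideanSpace.single i (1:ℝ)

lemma grad_coord (f : E2 → ℝ) (x : E2) (i : Fin 2) :
    gradient f x i = fderiv ℝ f x (e i) := by
  have h : (inner ℝ (gradient f x) (EuclideanSpace.single i (1:ℝ)) : ℝ)
      = fderiv ℝ f x (EuclideanSpace.single i (1:ℝ)) :=
    InnerProductSpace.toDual_symm_apply
  rwa [EuclideanSpace.inner_single_right, RCLike.conj_to_real, one_mul] at h

lemma grad_inner (f g : E2 → ℝ) (x : E2) :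
    (inner ℝ (gradient f x) (gradient g x) : ℝ)
      = ∑ i, fderiv ℝ f x (e i) * fderiv ℝ g x (e i) := by
  rw [PiLp.inner_apply]
  refine Finset.sum_congr rfl fun i _ => ?_
  simp [grad_coord, RCLike.inner_apply, mul_comm]

lemma grad_norm_sq (f : E2 → ℝ) (x : E2) :
    ‖gradient f x‖ ^ 2 = ∑ i, fderiv ℝ f x (e i) ^ 2 := by
  rw [← real_inner_self_eq_norm_sq, grad_inner]
  simp [sq]

lemma divergence_zero_pi (W : Fin 2 → (Fin 2 → ℝ) → ℝ) (hW : ∀ i, ContDiff ℝ 1 (W i))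
    (hsupp : ∀ i, HasCompactSupport (W i)) :
    ∫ y : Fin 2 → ℝ, ∑ i, fderiv ℝ (W i) y (Pi.single i 1) = 0 := by
  obtain ⟨R₀, hR₀⟩ := (isCompact_iUnion fun i => (hsupp i).isCompact).isBounded.subset_closedBall 0
  set R : ℝ := max R₀ 0 with hR
  have hRsub : ∀ i, tsupport (W i) ⊆ Metric.closedBall 0 R := fun i =>
    (subset_iUnion (fun i => tsupport (W i)) i).trans
      (hR₀.trans (Metric.closedBall_subset_closedBall (le_max_left _ _)))
  have hR0 : (0:ℝ) ≤ R := le_max_right _ _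
  set a : Fin 2 → ℝ := fun _ => -(R+1) with ha
  set b : Fin 2 → ℝ := fun _ => (R+1) with hb
  have hle : a ≤ b := fun i => by show -(R+1) ≤ R+1; linarith
  have hvanish : ∀ (x : Fin 2 → ℝ), R < ‖x‖ → ∀ i, W i x = 0 := by
    intro x hx i
    apply image_eq_zero_of_notMem_tsupport
    intro hmem
    have := hRsub i hmem
    rw [Metric.mem_closedBall, dist_zero_right] at this
    linarith
  have key := MeasureTheory.integral_divergence_of_hasFDerivAt_off_countable' a b hle
    W (fun i x => fderiv ℝ (W i) x) ∅ Set.countable_empty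
    (fun i => ((hW i).continuous).continuousOn)
    (fun x _ i => ((hW i).differentiable one_ne_zero x).hasFDerivAt)
    (by
      apply ContinuousOn.integrableOn_compact isCompact_Icc
      apply Continuous.continuousOn
      exact continuous_finset_sum _ fun i _ =>
        (((hW i).continuous_fderiv one_ne_zero).clm_apply continuous_const))
  have hfaces : ∀ i : Fin 2,
      ((∫ x in Set.Icc (a ∘ i.succAbove) (b ∘ i.succAbove), W i (i.insertNth (b i) x)) -
        ∫ x in Set.Icc (a ∘ i.succAbove) (b ∘ i.succAbove), W i (i.insertNth (a i) x)) = 0 := by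
    intro i
    have h1 : ∀ (c : ℝ), R < |c| →
        ∀ x : Fin 1 → ℝ, W i (i.insertNth c x) = 0 := by
      intro c hc x
      apply hvanish _ _ i
      have h2 : |(i.insertNth c x : Fin 2 → ℝ) i| ≤ ‖(i.insertNth c x : Fin 2 → ℝ)‖ := by
        exact norm_le_pi_norm (i.insertNth c x : Fin 2 → ℝ) i
      rw [Fin.insertNth_apply_same] at h2
      linarith
    rw [MeasureTheory.setIntegral_congr_fun measurableSet_Icc
        (fun x _ => h1 (b i) (by show R < |R+1|; rw [abs_of_nonneg (by linarith)]; linarith) x),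
      MeasureTheory.setIntegral_congr_fun measurableSet_Icc
        (fun x _ => h1 (a i) (by show R < |(-(R+1) : ℝ)|; rw [abs_of_nonpos (by linarith)]; linarith) x)]
    simp
  rw [Finset.sum_congr rfl (fun i _ => hfaces i), Finset.sum_const_zero] at key
  rw [← key]
  symm
  apply MeasureTheory.setIntegral_eq_integral_of_forall_compl_eq_zero
  intro x hx
  have hxnorm : R < ‖x‖ := by
    by_contra h
    push_neg at h
    apply hx
    constructor
    · intro j
      have h3 := abs_le.1 ((norm_le_pi_norm (x : Fin 2 → ℝ) j).trans h)
      show -(R+1) ≤ x j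
      linarith [h3.1]
    · intro j
      have h3 := abs_le.1 ((norm_le_pi_norm (x : Fin 2 → ℝ) j).trans h)
      show x j ≤ R+1
      linarith [h3.2]
  refine Finset.sum_eq_zero fun i _ => ?_
  have hnot : x ∉ tsupport (W i) := fun hmem => by
    have := hRsub i hmem; rw [Metric.mem_closedBall, dist_zero_right] at this; linarith
  have hz : fderiv ℝ (W i) x = 0 := by
    by_contra h
    exact hnot (support_fderiv_subset ℝ (Function.mem_support.2 h))
  simp [hz]

lemma divergence_zero (V : Fin 2 → E2 → ℝ) (hV : ∀ i, ContDiff ℝ 1 (V i))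
    (hsupp : ∀ i, HasCompactSupport (V i)) :
    ∫ x : E2, ∑ i, fderiv ℝ (V i) x (e i) = 0 := by
  set ε : E2 ≃L[ℝ] (Fin 2 → ℝ) := EuclideanSpace.equiv (Fin 2) ℝ with hε
  set W : Fin 2 → (Fin 2 → ℝ) → ℝ := fun i y => V i (ε.symm y) with hW
  have hWc : ∀ i, ContDiff ℝ 1 (W i) := fun i =>
    (hV i).comp (ε.symm.contDiff)
  have hWs : ∀ i, HasCompactSupport (W i) := fun i =>
    (hsupp i).comp_homeomorph ε.symm.toHomeomorph
  have hfd : ∀ i (y : Fin 2 → ℝ),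
      fderiv ℝ (W i) y (Pi.single i 1) = fderiv ℝ (V i) (ε.symm y) (ε.symm (Pi.single i 1)) := by
    intro i y
    show fderiv ℝ (V i ∘ ε.symm) y (Pi.single i 1) = _
    rw [fderiv_comp _ ((hV i).differentiable one_ne_zero _) (ε.symm.differentiableAt)]
    simp [ContinuousLinearEquiv.fderiv]
  have hsingle : ∀ i : Fin 2, (ε.symm (Pi.single i 1) : E2) = EuclideanSpace.single i (1:ℝ) := by
    intro i; rfl
  have hmp := (EuclideanSpace.volume_preserving_symm_measurableEquiv_toLp (Fin 2)).symm
  have hint : ∫ x : E2, ∑ i, fderiv ℝ (V i) x (e i)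
      = ∫ y : Fin 2 → ℝ, ∑ i, fderiv ℝ (V i) (ε.symm y) (e i) := by
    rw [← hmp.integral_comp (MeasurableEquiv.toLp 2 (Fin 2 → ℝ)).measurableEmbedding]
    rfl
  rw [hint, ← divergence_zero_pi W hWc hWs]
  refine integral_congr_ae (Filter.Eventually.of_forall fun y => ?_)
  refine Finset.sum_congr rfl fun i _ => ?_
  rw [hfd i y, hsingle]

lemma int_by_parts (U : Set E2) (hU : IsOpen U) (w ψ : E2 → ℝ)
    (hw : ∀ x ∈ U, ContDiffAt ℝ 2 w x) (hψ : ∀ x ∈ U, ContDiffAt ℝ 1 ψ x)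
    (hψs : HasCompactSupport ψ) (hψU : tsupport ψ ⊆ U) :
    IntegrableOn (fun x => ∑ i, fderiv ℝ ψ x (e i) * fderiv ℝ w x (e i)
        + ψ x * eLaplacian w x) U volume ∧
    ∫ x in U, (∑ i, fderiv ℝ ψ x (e i) * fderiv ℝ w x (e i) + ψ x * eLaplacian w x) = 0 := by
  set V : Fin 2 → E2 → ℝ := fun i x => ψ x * fderiv ℝ w x (e i) with hV
  have hfd1 : ∀ x ∈ U, ∀ i : Fin 2, ContDiffAt ℝ 1 (fun y => fderiv ℝ w y (e i)) x := by
    intro x hx i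
    exact (((hw x hx).fderiv_right (le_refl 2)).clm_apply contDiffAt_const)
  have hVc : ∀ i, ContDiff ℝ 1 (V i) := by
    intro i
    rw [contDiff_iff_contDiffAt]
    intro x
    by_cases hx : x ∈ U
    · exact ((hψ x hx).mul (hfd1 x hx i))
    · have hopen : IsOpen (tsupport ψ)ᶜ := (isClosed_tsupport ψ).isOpen_compl
      have hmem : (tsupport ψ)ᶜ ∈ nhds x :=
        hopen.mem_nhds (fun h => hx (hψU h))
      refine contDiffAt_const (c := 0) |>.congr_of_eventuallyEq ?_
      filter_upwards [hmem] with y hy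
      simp [hV, image_eq_zero_of_notMem_tsupport hy]
  have hVs : ∀ i, HasCompactSupport (V i) := by
    intro i
    apply hψs.mono'
    intro x hx
    have : ψ x ≠ 0 := by
      intro h; apply hx; simp [hV, h]
    exact subset_tsupport ψ this
  have hdiveq : ∀ x ∈ U,
      ∑ i, fderiv ℝ (V i) x (e i)
        = ∑ i, fderiv ℝ ψ x (e i) * fderiv ℝ w x (e i) + ψ x * eLaplacian w x := by
    intro x hx
    rw [eLaplacian, Finset.mul_sum, ← Finset.sum_add_distrib]
    refine Finset.sum_congr rfl fun i _ => ?_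
    rw [hV]
    rw [fderiv_fun_mul ((hψ x hx).differentiableAt one_ne_zero)
        ((hfd1 x hx i).differentiableAt one_ne_zero)]
    simp only [ContinuousLinearMap.add_apply, ContinuousLinearMap.smul_apply,
      smul_eq_mul]
    ring
  have hzero_off : ∀ x, x ∉ U → ∑ i, fderiv ℝ (V i) x (e i) = 0 := by
    intro x hx
    refine Finset.sum_eq_zero fun i _ => ?_
    have hnot : x ∉ tsupport (V i) := by
      intro h
      apply hx
      apply hψU
      refine closure_mono ?_ h
      intro y hy
      have : ψ y ≠ 0 := by intro h0; apply hy; simp [hV, h0]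
      exact this
    have : fderiv ℝ (V i) x = 0 := by
      by_contra h
      exact hnot (support_fderiv_subset ℝ (Function.mem_support.2 h))
    simp [this]
  have hdivcont : Continuous (fun x => ∑ i, fderiv ℝ (V i) x (e i)) :=
    continuous_finset_sum _ fun i _ =>
      (((hVc i).continuous_fderiv one_ne_zero).clm_apply continuous_const)
  have hdivsupp : HasCompactSupport (fun x => ∑ i, fderiv ℝ (V i) x (e i)) := by
    apply hψs.mono'
    intro x hx
    have : ∃ i, fderiv ℝ (V i) x (e i) ≠ 0 := by
      by_contra h
      push_neg at h
      exact hx (Finset.sum_eq_zero fun i _ => h i)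
    obtain ⟨i, hi⟩ := this
    have h2 : fderiv ℝ (V i) x ≠ 0 := fun h0 => by simp [h0] at hi
    have h3 : x ∈ tsupport (V i) := support_fderiv_subset ℝ (Function.mem_support.2 h2)
    refine closure_mono ?_ h3
    intro y hy
    have : ψ y ≠ 0 := by intro h0; apply hy; simp [hV, h0]
    exact this
  have hdivint : IntegrableOn (fun x => ∑ i, fderiv ℝ (V i) x (e i)) U volume :=
    (hdivcont.integrable_of_hasCompactSupport hdivsupp).integrableOn
  constructor
  · exact hdivint.congr_fun (fun x hx => hdiveq x hx) hU.measurableSet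
  calc ∫ x in U, (∑ i, fderiv ℝ ψ x (e i) * fderiv ℝ w x (e i) + ψ x * eLaplacian w x)
      = ∫ x in U, ∑ i, fderiv ℝ (V i) x (e i) :=
        setIntegral_congr_fun hU.measurableSet (fun x hx => (hdiveq x hx).symm)
    _ = ∫ x : E2, ∑ i, fderiv ℝ (V i) x (e i) :=
        setIntegral_eq_integral_of_forall_compl_eq_zero (fun x hx => hzero_off x hx)
    _ = 0 := divergence_zero V hVc hVs

lemma cda {U : Set E2} (hU : IsOpen U) {u : E2 → ℝ} (hu : ContDiffOn ℝ 2 u U)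
    {x : E2} (hx : x ∈ U) : ContDiffAt ℝ 2 u x :=
  hu.contDiffAt (hU.mem_nhds hx)

lemma log_hasFDerivAt {U : Set E2} (hU : IsOpen U) {u : E2 → ℝ} (hu : ContDiffOn ℝ 2 u U)
    (hpos : ∀ x ∈ U, 0 < u x) {x : E2} (hx : x ∈ U) :
    HasFDerivAt (fun z => Real.log (u z)) ((u x)⁻¹ • fderiv ℝ u x) x := by
  have hd : DifferentiableAt ℝ u x := (cda hU hu hx).differentiableAt two_ne_zero
  simpa [Function.comp_def] using (Real.hasDerivAt_log (ne_of_gt (hpos x hx))).comp_hasFDerivAt x hd.hasFDerivAt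

lemma fderiv_coord_contDiffAt {u : E2 → ℝ} {x : E2} (hu : ContDiffAt ℝ 2 u x) (j : Fin 2) :
    ContDiffAt ℝ 1 (fun y => fderiv ℝ u y (e j)) x :=
  (hu.fderiv_right (le_refl 2)).clm_apply contDiffAt_const

lemma log_eLaplacian {U : Set E2} (hU : IsOpen U) {u : E2 → ℝ} (hu : ContDiffOn ℝ 2 u U)
    (hpos : ∀ x ∈ U, 0 < u x) {x : E2} (hx : x ∈ U) :
    eLaplacian (fun z => Real.log (u z)) x
      = eLaplacian u x / u x
        - ∑ j, (fderiv ℝ (fun z => Real.log (u z)) x (e j))^2 := by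
  have hdx : DifferentiableAt ℝ u x := (cda hU hu hx).differentiableAt two_ne_zero
  have hux : u x ≠ 0 := ne_of_gt (hpos x hx)
  have hterm : ∀ j : Fin 2,
      fderiv ℝ (fun y => fderiv ℝ (fun z => Real.log (u z)) y (e j)) x (e j)
        = (u x)⁻¹ * fderiv ℝ (fun y => fderiv ℝ u y (e j)) x (e j)
          + fderiv ℝ u x (e j) * (-((u x)^2)⁻¹ * fderiv ℝ u x (e j)) := by
    intro j
    have hev : (fun y => fderiv ℝ (fun z => Real.log (u z)) y (e j))
        =ᶠ[nhds x] (fun y => (u y)⁻¹ * fderiv ℝ u y (e j)) := by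
      filter_upwards [hU.mem_nhds hx] with y hy
      rw [(log_hasFDerivAt hU hu hpos hy).fderiv]
      simp
    rw [hev.fderiv_eq]
    have hA : HasFDerivAt (fun y => (u y)⁻¹) ((-((u x)^2)⁻¹) • fderiv ℝ u x) x := by
      simpa [Function.comp_def] using (hasDerivAt_inv hux).comp_hasFDerivAt x hdx.hasFDerivAt
    have hB : DifferentiableAt ℝ (fun y => fderiv ℝ u y (e j)) x :=
      (fderiv_coord_contDiffAt (cda hU hu hx) j).differentiableAt one_ne_zero
    rw [fderiv_fun_mul hA.differentiableAt hB, hA.fderiv]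
    simp only [ContinuousLinearMap.add_apply, ContinuousLinearMap.smul_apply, smul_eq_mul]
  have hlog : ∀ j : Fin 2, fderiv ℝ (fun z => Real.log (u z)) x (e j)
      = (u x)⁻¹ * fderiv ℝ u x (e j) := by
    intro j
    rw [(log_hasFDerivAt hU hu hpos hx).fderiv]
    simp
  rw [eLaplacian, eLaplacian, Finset.sum_congr rfl (fun j _ => hterm j), Finset.sum_div,
    ← Finset.sum_sub_distrib]
  refine Finset.sum_congr rfl fun j _ => ?_
  rw [hlog j]
  field_simp
  ring

lemma exp_hasFDerivAt {U : Set E2} (hU : IsOpen U) {s : E2 → ℝ} (hs : ContDiffOn ℝ 2 s U)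
    (c : ℝ) {x : E2} (hx : x ∈ U) :
    HasFDerivAt (fun y => Real.exp (c * s y)) ((Real.exp (c * s x) * c) • fderiv ℝ s x) x := by
  have hdx : DifferentiableAt ℝ s x := (cda hU hs hx).differentiableAt two_ne_zero
  have h1 : HasFDerivAt (fun y => c * s y) (c • fderiv ℝ s x) x :=
    hdx.hasFDerivAt.const_mul c
  have := (Real.hasDerivAt_exp (c * s x)).comp_hasFDerivAt x h1
  simpa [smul_smul, mul_comm, Function.comp_def] using this

lemma exp_eLaplacian {U : Set E2} (hU : IsOpen U) {s : E2 → ℝ} (hs : ContDiffOn ℝ 2 s U)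
    (c : ℝ) {x : E2} (hx : x ∈ U) :
    eLaplacian (fun y => Real.exp (c * s y)) x
      = Real.exp (c * s x) * (c * eLaplacian s x + c^2 * ∑ j, (fderiv ℝ s x (e j))^2) := by
  have hdx : DifferentiableAt ℝ s x := (cda hU hs hx).differentiableAt two_ne_zero
  have hterm : ∀ j : Fin 2,
      fderiv ℝ (fun y => fderiv ℝ (fun z => Real.exp (c * s z)) y (e j)) x (e j)
        = Real.exp (c * s x) * (c * fderiv ℝ (fun y => fderiv ℝ s y (e j)) x (e j))
          + (c * fderiv ℝ s x (e j)) * (Real.exp (c * s x) * c * fderiv ℝ s x (e j)) := by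
    intro j
    have hev : (fun y => fderiv ℝ (fun z => Real.exp (c * s z)) y (e j))
        =ᶠ[nhds x] (fun y => Real.exp (c * s y) * (c * fderiv ℝ s y (e j))) := by
      filter_upwards [hU.mem_nhds hx] with y hy
      rw [(exp_hasFDerivAt hU hs c hy).fderiv]
      simp only [ContinuousLinearMap.smul_apply, smul_eq_mul]
      ring
    rw [hev.fderiv_eq]
    have hA : HasFDerivAt (fun y => Real.exp (c * s y))
        ((Real.exp (c * s x) * c) • fderiv ℝ s x) x := exp_hasFDerivAt hU hs c hx
    have hB' : DifferentiableAt ℝ (fun y => fderiv ℝ s y (e j)) x :=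
      (fderiv_coord_contDiffAt (cda hU hs hx) j).differentiableAt one_ne_zero
    have hB : DifferentiableAt ℝ (fun y => c * fderiv ℝ s y (e j)) x := hB'.const_mul c
    rw [fderiv_fun_mul hA.differentiableAt hB, hA.fderiv]
    have hBf : fderiv ℝ (fun y => c * fderiv ℝ s y (e j)) x
        = c • fderiv ℝ (fun y => fderiv ℝ s y (e j)) x := fderiv_const_mul hB' c
    rw [hBf]
    simp only [ContinuousLinearMap.add_apply, ContinuousLinearMap.smul_apply, smul_eq_mul]
  rw [eLaplacian, Finset.sum_congr rfl (fun j _ => hterm j), eLaplacian]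
  rw [Finset.sum_add_distrib, mul_add]
  congr 1 <;> simp only [Finset.mul_sum] <;>
    exact Finset.sum_congr rfl fun j _ => by ring

lemma sum_fderiv {k : ℕ} (g : Fin k → E2 → ℝ) {x : E2}
    (hg : ∀ i, DifferentiableAt ℝ (g i) x) :
    fderiv ℝ (fun y => ∑ i, g i y) x = ∑ i, fderiv ℝ (g i) x :=
  fderiv_fun_sum (fun i _ => hg i)

lemma sum_eLaplacian {U : Set E2} (hU : IsOpen U) {k : ℕ} (g : Fin k → E2 → ℝ)
    (hg : ∀ i, ContDiffOn ℝ 2 (g i) U) {x : E2} (hx : x ∈ U) :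
    eLaplacian (fun y => ∑ i, g i y) x = ∑ i, eLaplacian (g i) x := by
  rw [eLaplacian]
  have hterm : ∀ j : Fin 2,
      fderiv ℝ (fun y => fderiv ℝ (fun z => ∑ i, g i z) y (e j)) x (e j)
        = ∑ i, fderiv ℝ (fun y => fderiv ℝ (g i) y (e j)) x (e j) := by
    intro j
    have hev : (fun y => fderiv ℝ (fun z => ∑ i, g i z) y (e j))
        =ᶠ[nhds x] (fun y => ∑ i, fderiv ℝ (g i) y (e j)) := by
      filter_upwards [hU.mem_nhds hx] with y hy
      rw [sum_fderiv g (fun i => (cda hU (hg i) hy).differentiableAt two_ne_zero)]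
      simp
    rw [hev.fderiv_eq]
    rw [sum_fderiv _ (fun i =>
      (fderiv_coord_contDiffAt (cda hU (hg i) hx) j).differentiableAt one_ne_zero)]
    simp
  rw [Finset.sum_congr rfl (fun j _ => hterm j), Finset.sum_comm]
  rfl

lemma pair_sum {k : ℕ} (F : Fin k → Fin k → ℝ) (hsym : ∀ i j, F i j = F j i) :
    ∑ i, ∑ j, F i j
      = ∑ i, F i i + 2 * ∑ i, ∑ j ∈ Finset.univ.filter (fun j => i < j), F i j := by
  have h1 : ∀ i : Fin k, ∑ j, F i j
      = ∑ j ∈ Finset.univ.filter (fun j => i < j), F i j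
        + (F i i + ∑ j ∈ Finset.univ.filter (fun j => j < i), F i j) := by
    intro i
    rw [← Finset.sum_filter_add_sum_filter_not Finset.univ (fun j => i < j)]
    congr 1
    have hset : Finset.univ.filter (fun j => ¬ i < j)
        = insert i (Finset.univ.filter (fun j : Fin k => j < i)) := by
      ext j
      simp only [Finset.mem_filter, Finset.mem_univ, true_and, Finset.mem_insert, not_lt]
      constructor
      · intro h
        rcases lt_or_eq_of_le h with h' | h'
        · exact Or.inr h'
        · exact Or.inl h'
      · rintro (rfl | h)
        · exact le_rfl
        · exact le_of_lt h
    rw [hset, Finset.sum_insert (by simp)]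
  have hswap : ∑ i, ∑ j ∈ Finset.univ.filter (fun j => j < i), F i j
      = ∑ i, ∑ j ∈ Finset.univ.filter (fun j => i < j), F i j := by
    simp only [Finset.sum_filter]
    rw [Finset.sum_comm]
    refine Finset.sum_congr rfl fun i _ => Finset.sum_congr rfl fun j _ => ?_
    rw [hsym]
  rw [Finset.sum_congr rfl (fun i _ => h1 i), Finset.sum_add_distrib,
    Finset.sum_add_distrib, hswap]
  ring

lemma key_pointwise (U : Set E2) (hU : IsOpen U) (k : ℕ) (hk : 1 ≤ k)
    (u : Fin k → E2 → ℝ) (hreg : ∀ i, ContDiffOn ℝ 2 (u i) U)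
    (hpos : ∀ i, ∀ x ∈ U, 0 < u i x) {x : E2} (hx : x ∈ U) :
    eLaplacian (fun y => Real.exp ((((k:ℝ)+1)/(2*(k:ℝ))) * ∑ i, Real.log (u i y))) x
        / Real.exp ((((k:ℝ)+1)/(2*(k:ℝ))) * ∑ i, Real.log (u i x))
      ≤ (((k:ℝ)+1)/(2*(k:ℝ))) * (∑ i, eLaplacian (u i) x / u i x
        + ∑ i, ∑ j ∈ Finset.univ.filter (fun j => i < j),
            (inner ℝ (gradient (fun y => Real.log (u i y)) x)
                   (gradient (fun y => Real.log (u j y)) x) : ℝ)) := by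
  set β : ℝ := (((k:ℝ)+1)/(2*(k:ℝ))) with hβ
  have hkpos : (0:ℝ) < (k:ℝ) := by exact_mod_cast Nat.pos_of_ne_zero (by omega)
  have hβpos : 0 < β := by rw [hβ]; positivity
  set L : Fin k → E2 → ℝ := fun i y => Real.log (u i y) with hL
  have hLC : ∀ i, ContDiffOn ℝ 2 (L i) U := fun i =>
    (hreg i).log (fun y hy => ne_of_gt (hpos i y hy))
  have hsC : ContDiffOn ℝ 2 (fun y => ∑ i, L i y) U :=
    ContDiffOn.sum (fun i _ => hLC i)
  set a : Fin k → Fin 2 → ℝ := fun i j => fderiv ℝ (L i) x (e j) with ha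
  set A : ℝ := ∑ i, ∑ j, (a i j)^2 with hA
  set B : ℝ := ∑ i, ∑ j ∈ Finset.univ.filter (fun j => i < j),
      (∑ t, a i t * a j t) with hB
  set T : ℝ := ∑ i, eLaplacian (u i) x / u i x with hT
  -- inner products are the F i j
  have hinner : ∀ i j : Fin k,
      (inner ℝ (gradient (L i) x) (gradient (L j) x) : ℝ) = ∑ t, a i t * a j t := by
    intro i j; rw [grad_inner]
  -- Laplacian of s
  have hΔs : eLaplacian (fun y => ∑ i, L i y) x = T - A := by
    rw [sum_eLaplacian hU L hLC hx, hT, hA, ← Finset.sum_sub_distrib]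
    refine Finset.sum_congr rfl fun i _ => ?_
    rw [hL]
    rw [log_eLaplacian hU (hreg i) (hpos i) hx]
  -- first derivative of s
  have hps : ∀ j : Fin 2, fderiv ℝ (fun y => ∑ i, L i y) x (e j) = ∑ i, a i j := by
    intro j
    rw [sum_fderiv L (fun i => (cda hU (hLC i) hx).differentiableAt two_ne_zero)]
    simp [ha]
  -- sum of squares of ∇s
  set C : ℝ := ∑ j, (fderiv ℝ (fun y => ∑ i, L i y) x (e j))^2 with hC
  have hCval : C = A + 2 * B := by
    have h1 : C = ∑ i, ∑ i', (∑ j, a i j * a i' j) := by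
      rw [hC]
      have : ∀ j : Fin 2, (fderiv ℝ (fun y => ∑ i, L i y) x (e j))^2
          = ∑ i, ∑ i', a i j * a i' j := by
        intro j; rw [hps j, sq, Finset.sum_mul_sum]
      rw [Finset.sum_congr rfl fun j _ => this j]
      rw [Finset.sum_comm]
      refine Finset.sum_congr rfl fun i _ => ?_
      rw [Finset.sum_comm]
    rw [h1, pair_sum _ (fun i j => Finset.sum_congr rfl fun t _ => mul_comm _ _)]
    congr 1
    · rw [hA]; exact Finset.sum_congr rfl fun i _ => Finset.sum_congr rfl fun j _ => (sq _).symm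
  have hApos : 0 ≤ A := Finset.sum_nonneg fun i _ => Finset.sum_nonneg fun j _ => sq_nonneg _
  have hCS : C ≤ (k:ℝ) * A := by
    have hj : ∀ j : Fin 2, (∑ i, a i j)^2 ≤ (k:ℝ) * ∑ i, (a i j)^2 := fun j => by
      simpa using sq_sum_le_card_mul_sum_sq (s := Finset.univ) (f := fun i => a i j)
    calc C = ∑ j, (∑ i, a i j)^2 := by
            rw [hC]; exact Finset.sum_congr rfl fun j _ => by rw [hps j]
      _ ≤ ∑ j, (k:ℝ) * ∑ i, (a i j)^2 := Finset.sum_le_sum fun j _ => hj j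
      _ = (k:ℝ) * ∑ j, ∑ i, (a i j)^2 := by rw [Finset.mul_sum]
      _ = (k:ℝ) * A := by rw [hA, Finset.sum_comm]
  -- laplacian of w over w
  have hw := exp_eLaplacian hU hsC β hx
  beta_reduce at hw
  rw [← hC] at hw
  have hexp_pos : 0 < Real.exp (β * ∑ i, L i x) := Real.exp_pos _
  show eLaplacian (fun y => Real.exp (β * ∑ i, L i y)) x / Real.exp (β * ∑ i, L i x)
    ≤ β * ((∑ i, eLaplacian (u i) x / u i x) + ∑ i, ∑ j ∈ Finset.univ.filter (fun j => i < j),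
        (inner ℝ (gradient (L i) x) (gradient (L j) x) : ℝ))
  rw [hw, hΔs]
  rw [mul_div_cancel_left₀ _ (ne_of_gt hexp_pos)]
  rw [Finset.sum_congr rfl (fun i (_ : i ∈ Finset.univ) => Finset.sum_congr rfl
      (fun j _ => hinner i j)), ← hB, ← hT]
  -- now pure algebra: β * (T - A) + β^2 * C ≤ β * (T + B), given C = A + 2B, C ≤ k A
  have hmain : β * C ≤ A + B := by
    rw [hβ, div_mul_eq_mul_div, div_le_iff₀ (by linarith : (0:ℝ) < 2*(k:ℝ))]
    have hk1 : (1:ℝ) ≤ (k:ℝ) := by exact_mod_cast hk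
    nlinarith [hCval, hCS]
  nlinarith [mul_le_mul_of_nonneg_left hmain (le_of_lt hβpos)]

lemma norm_sq_coords (v : E2) : ‖v‖^2 = ∑ i, (v i)^2 := by
  rw [← real_inner_self_eq_norm_sq, PiLp.inner_apply]
  exact Finset.sum_congr rfl fun i _ => by simp [RCLike.inner_apply, sq]

lemma integrableOn_of_supp {U : Set E2} (hU : IsOpen U) {K : Set E2} (hK : IsCompact K)
    (hKmeas : MeasurableSet K) {h : E2 → ℝ} (hc : ContinuousOn h U) (hKU : K ⊆ U)
    (hs : ∀ x, x ∉ K → h x = 0) : IntegrableOn h U volume := by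
  have h1 : IntegrableOn h K volume := (hc.mono hKU).integrableOn_compact hK
  have h2 : IntegrableOn h (U \ K) volume := by
    have hz : IntegrableOn (fun _ : E2 => (0:ℝ)) (U \ K) volume := integrableOn_zero
    refine hz.congr_fun (fun x hx => (hs x hx.2).symm) (hU.measurableSet.diff hKmeas)
  have h3 : IntegrableOn h (K ∪ (U \ K)) volume := h1.union h2
  refine h3.mono_set (fun x hx => ?_)
  by_cases hxK : x ∈ K
  · exact Or.inl hxK
  · exact Or.inr ⟨hx, hxK⟩

/-- if `Σ Δuᵢ/uᵢ + Σ_{i<j} ⟪∇log uᵢ, ∇log uⱼ⟫ < f` pointwise on `U`,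
then `∫_U (‖∇φ‖² + β_k f φ²) > 0` for every nonzero smooth `φ` compactly supported
in `U`, where `β_k = (k+1)/(2k)`. -/
theorem stmt_4 (U : Set (EuclideanSpace ℝ (Fin 2))) (hU : IsOpen U)
    (k : ℕ) (hk : 1 ≤ k) (u : Fin k → EuclideanSpace ℝ (Fin 2) → ℝ)
    (hreg : ∀ i, ContDiffOn ℝ 2 (u i) U) (hpos : ∀ i, ∀ x ∈ U, 0 < u i x)
    (f : EuclideanSpace ℝ (Fin 2) → ℝ) (hf : ContinuousOn f U)
    (hineq : ∀ x ∈ U, ∑ i, eLaplacian (u i) x / u i x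
        + ∑ i, ∑ j ∈ Finset.univ.filter (fun j => i < j),
            (inner ℝ (gradient (fun y => Real.log (u i y)) x)
                   (gradient (fun y => Real.log (u j y)) x) : ℝ) < f x)
    (φ : EuclideanSpace ℝ (Fin 2) → ℝ) (hφ : ContDiff ℝ (⊤ : ℕ∞) φ)
    (hφsupp : HasCompactSupport φ) (hφU : tsupport φ ⊆ U) (hφne : φ ≠ 0) :
    0 < ∫ x in U, (‖gradient φ x‖ ^ 2
        + (((k : ℝ) + 1) / (2 * (k : ℝ))) * f x * φ x ^ 2) := by
  set β : ℝ := ((k : ℝ) + 1) / (2 * (k : ℝ)) with hβ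
  have hkpos : (0:ℝ) < (k:ℝ) := by exact_mod_cast Nat.pos_of_ne_zero (by omega)
  have hβpos : 0 < β := by rw [hβ]; positivity
  set w : E2 → ℝ := fun y => Real.exp (β * ∑ i, Real.log (u i y)) with hw
  have hwpos : ∀ x, 0 < w x := fun x => Real.exp_pos _
  have hsC : ContDiffOn ℝ 2 (fun y => ∑ i, Real.log (u i y)) U :=
    ContDiffOn.sum (fun i _ => (hreg i).log (fun y hy => ne_of_gt (hpos i y hy)))
  have hwC : ContDiffOn ℝ 2 w U := (contDiffOn_const.mul hsC).exp
  -- the auxiliary function ψ = φ² / w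
  set ψ : E2 → ℝ := fun y => φ y ^ 2 * (w y)⁻¹ with hψdef
  have hψsub : ∀ y, ψ y ≠ 0 → φ y ≠ 0 := by
    intro y hy h0
    apply hy
    simp [hψdef, h0]
  have hψC : ∀ x ∈ U, ContDiffAt ℝ 1 ψ x := by
    intro x hx
    exact ((hφ.contDiffAt.of_le (by simp)).pow 2).mul
      (((cda hU hwC hx).of_le one_le_two).inv (ne_of_gt (hwpos x)))
  have hψs : HasCompactSupport ψ :=
    hφsupp.mono' (fun x hx => subset_tsupport φ (hψsub x hx))
  have hψU : tsupport ψ ⊆ U :=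
    (closure_mono (fun x hx => subset_tsupport φ (hψsub x hx))).trans
      ((closure_closure (s := support φ)).le.trans hφU)
  -- derivative of ψ on U
  have hψfd : ∀ x ∈ U, ∀ i : Fin 2, fderiv ℝ ψ x (e i)
      = (w x)⁻¹ * (2 * φ x * fderiv ℝ φ x (e i))
        + φ x ^ 2 * (-((w x)^2)⁻¹ * fderiv ℝ w x (e i)) := by
    intro x hx i
    have hφd : DifferentiableAt ℝ φ x := hφ.differentiable (by simp) x
    have hwd : DifferentiableAt ℝ w x := (cda hU hwC hx).differentiableAt two_ne_zero
    have hφ2 : HasFDerivAt (fun y => φ y ^ 2) ((2 * φ x) • fderiv ℝ φ x) x := by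
      simpa [Function.comp_def] using (hasDerivAt_pow 2 (φ x)).comp_hasFDerivAt x hφd.hasFDerivAt
    have hwinv : HasFDerivAt (fun y => (w y)⁻¹) ((-((w x)^2)⁻¹) • fderiv ℝ w x) x := by
      simpa [Function.comp_def] using (hasDerivAt_inv (ne_of_gt (hwpos x))).comp_hasFDerivAt x hwd.hasFDerivAt
    have hm := hφ2.fun_mul hwinv
    rw [hm.fderiv]
    simp only [ContinuousLinearMap.add_apply, ContinuousLinearMap.smul_apply, smul_eq_mul]
    ring
  -- pieces
  set I1 : E2 → ℝ := fun x => ‖gradient φ x - (φ x / w x) • gradient w x‖^2 with hI1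
  set D : E2 → ℝ := fun x => ∑ i, fderiv ℝ ψ x (e i) * fderiv ℝ w x (e i)
      + ψ x * eLaplacian w x with hD
  set g : E2 → ℝ := fun x => (β * f x - eLaplacian w x / w x) * φ x ^ 2 with hg
  -- the pointwise identity on U
  have hident : ∀ x ∈ U, ‖gradient φ x‖^2 + β * f x * φ x ^ 2 = I1 x + D x + g x := by
    intro x hx
    have hWne : w x ≠ 0 := ne_of_gt (hwpos x)
    simp only [hI1, hD, hg]
    rw [norm_sq_coords, norm_sq_coords]
    have hcoord : ∀ i : Fin 2,
        ((gradient φ x - (φ x / w x) • gradient w x) : E2) i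
          = fderiv ℝ φ x (e i) - (φ x / w x) * fderiv ℝ w x (e i) := by
      intro i
      have : ((gradient φ x - (φ x / w x) • gradient w x) : E2) i
          = gradient φ x i - (φ x / w x) * gradient w x i := rfl
      rw [this, grad_coord, grad_coord]
    have hs1 : ∑ i, ((gradient φ x - (φ x / w x) • gradient w x : E2) i)^2
        = ∑ i, (fderiv ℝ φ x (e i) - (φ x / w x) * fderiv ℝ w x (e i))^2 :=
      Finset.sum_congr rfl fun i _ => by rw [hcoord i]
    have hs2 : ∑ i, ((gradient φ x : E2) i)^2 = ∑ i, (fderiv ℝ φ x (e i))^2 :=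
      Finset.sum_congr rfl fun i _ => by rw [grad_coord φ x i]
    have hs3 : ∑ i, fderiv ℝ ψ x (e i) * fderiv ℝ w x (e i)
        = ∑ i, ((w x)⁻¹ * (2 * φ x * fderiv ℝ φ x (e i))
            + φ x ^ 2 * (-((w x)^2)⁻¹ * fderiv ℝ w x (e i))) * fderiv ℝ w x (e i) :=
      Finset.sum_congr rfl fun i _ => by rw [hψfd x hx i]
    rw [hs1, hs2, hs3]
    have hψx : ψ x = φ x ^ 2 * (w x)⁻¹ := rfl
    rw [hψx]
    have hterm : ∀ i : Fin 2, (fderiv ℝ φ x (e i))^2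
        = (fderiv ℝ φ x (e i) - (φ x / w x) * fderiv ℝ w x (e i))^2
          + ((w x)⁻¹ * (2 * φ x * fderiv ℝ φ x (e i))
             + φ x ^ 2 * (-((w x)^2)⁻¹ * fderiv ℝ w x (e i))) * fderiv ℝ w x (e i) := by
      intro i
      field_simp
      ring
    rw [Finset.sum_congr rfl (fun i (_ : i ∈ Finset.univ) => hterm i), Finset.sum_add_distrib]
    ring
  -- strict pointwise inequality
  have hstrict : ∀ x ∈ U, eLaplacian w x / w x < β * f x := by
    intro x hx
    refine lt_of_le_of_lt ?_ (mul_lt_mul_of_pos_left (hineq x hx) hβpos)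
    exact key_pointwise U hU k hk u hreg hpos hx
  set K := tsupport φ with hK
  have hgradφ_cont : Continuous (fun x => gradient φ x) := by
    have h1 : Continuous (fun x => fderiv ℝ φ x) := hφ.continuous_fderiv (by simp)
    exact ((InnerProductSpace.toDual ℝ E2).symm.continuous).comp h1
  have hgradφ0 : ∀ x, x ∉ K → gradient φ x = 0 := by
    intro x hx
    have h0 : fderiv ℝ φ x = 0 := by
      by_contra h
      exact hx (support_fderiv_subset ℝ (Function.mem_support.2 h))
    simp [gradient, h0]
  have hφ0 : ∀ x, x ∉ K → φ x = 0 := fun x hx => image_eq_zero_of_notMem_tsupport hx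
  have hgradw_cont : ContinuousOn (fun x => gradient w x) U := by
    intro x hx
    apply ContinuousAt.continuousWithinAt
    have h1 : ContDiffAt ℝ 1 (fderiv ℝ w) x := (cda hU hwC hx).fderiv_right (le_refl 2)
    have h1' : ContinuousAt (fun y => fderiv ℝ w y) x := h1.continuousAt
    exact ((InnerProductSpace.toDual ℝ E2).symm.continuous.continuousAt).comp h1'
  have hwcont : ContinuousOn w U := hwC.continuousOn
  set tot : E2 → ℝ := fun x => ‖gradient φ x‖^2 + β * f x * φ x^2 with htot
  have htot_cont : ContinuousOn tot U :=
    ((hgradφ_cont.norm.pow 2).continuousOn).add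
      ((continuousOn_const.mul hf).mul ((hφ.continuous.pow 2).continuousOn))
  have htot0 : ∀ x, x ∉ K → tot x = 0 := fun x hx => by
    simp [htot, hgradφ0 x hx, hφ0 x hx]
  have htot_int : IntegrableOn tot U volume :=
    integrableOn_of_supp hU hφsupp (isClosed_tsupport φ).measurableSet htot_cont hφU htot0
  have hI1_cont : ContinuousOn I1 U :=
    ((hgradφ_cont.continuousOn.sub
      ((hφ.continuous.continuousOn.div hwcont (fun x _ => ne_of_gt (hwpos x))).smul
        hgradw_cont)).norm.pow 2)
  have hI10 : ∀ x, x ∉ K → I1 x = 0 := fun x hx => by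
    simp [hI1, hgradφ0 x hx, hφ0 x hx]
  have hI1_int : IntegrableOn I1 U volume :=
    integrableOn_of_supp hU hφsupp (isClosed_tsupport φ).measurableSet hI1_cont hφU hI10
  have hI1_nonneg : 0 ≤ ∫ x in U, I1 x :=
    setIntegral_nonneg hU.measurableSet fun x _ => sq_nonneg _
  obtain ⟨hD_int, hD_zero⟩ := int_by_parts U hU w ψ (fun x hx => cda hU hwC hx) hψC hψs hψU
  rw [← hD] at hD_int hD_zero
  have hg_int : IntegrableOn g U volume := by
    have h1 : IntegrableOn (fun x => tot x - I1 x - D x) U volume :=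
      (htot_int.sub hI1_int).sub hD_int
    refine h1.congr_fun (fun x hx => ?_) hU.measurableSet
    have := hident x hx
    simp only [htot]
    linarith [this]
  have hgpos_on : ∀ x ∈ U, φ x ≠ 0 → 0 < g x := by
    intro x hx hφx
    have h1 : 0 < β * f x - eLaplacian w x / w x := sub_pos.2 (hstrict x hx)
    have h2 : 0 < φ x ^ 2 := (sq_nonneg _).lt_of_ne (Ne.symm (pow_ne_zero 2 hφx))
    exact mul_pos h1 h2
  have hg_nonneg : ∀ x ∈ U, 0 ≤ g x := by
    intro x hx
    exact mul_nonneg (le_of_lt (sub_pos.2 (hstrict x hx))) (sq_nonneg _)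
  obtain ⟨x₀, hx₀⟩ := Function.ne_iff.1 hφne
  have hx₀ne : φ x₀ ≠ 0 := hx₀
  have hx₀U : x₀ ∈ U := hφU (subset_tsupport φ hx₀ne)
  have hO_open : IsOpen ({x | φ x ≠ 0} ∩ U) := by
    refine IsOpen.inter ?_ hU
    have : {x | φ x ≠ 0} = φ ⁻¹' ({0}ᶜ) := rfl
    rw [this]
    exact hφ.continuous.isOpen_preimage _ isOpen_compl_singleton
  have hsubO : {x | φ x ≠ 0} ∩ U ⊆ support g ∩ U := by
    rintro x ⟨h1, h2⟩
    exact ⟨ne_of_gt (hgpos_on x h2 h1), h2⟩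
  have hmeas_pos : 0 < volume (support g ∩ U) :=
    lt_of_lt_of_le (hO_open.measure_pos volume ⟨x₀, hx₀ne, hx₀U⟩) (measure_mono hsubO)
  have hae : 0 ≤ᵐ[volume.restrict U] g :=
    (ae_restrict_iff' hU.measurableSet).2 (Filter.Eventually.of_forall hg_nonneg)
  have hg_pos : 0 < ∫ x in U, g x :=
    (setIntegral_pos_iff_support_of_nonneg_ae hae hg_int).2 hmeas_pos
  have hDg : IntegrableOn (fun x => D x + g x) U volume := hD_int.add hg_int
  have hsplit : ∫ x in U, tot x
      = (∫ x in U, I1 x) + ((∫ x in U, D x) + (∫ x in U, g x)) := by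
    calc ∫ x in U, tot x = ∫ x in U, (I1 x + (D x + g x)) := by
          refine setIntegral_congr_fun hU.measurableSet (fun x hx => ?_)
          have := hident x hx
          simp only [htot]
          linarith [this]
      _ = (∫ x in U, I1 x) + ∫ x in U, (D x + g x) := integral_add hI1_int hDg
      _ = (∫ x in U, I1 x) + ((∫ x in U, D x) + (∫ x in U, g x)) := by
          rw [integral_add hD_int hg_int]
  show 0 < ∫ x in U, tot x
  rw [hsplit]
  linarith [hI1_nonneg, hD_zero, hg_pos]
end

section
/- Let U ⊆ ℝ² be open, let v : U → ℝ be a C² function that is positive everywhere, let β ∈ (1/2, 1), and set C(β) = (2/(2β−1))·(2(1−β)²/(2β−1) + 1). Assume that for every smooth function φ : ℝ² → ℝ that is not identically zero and whose (compact) support is contained in U, ∫_U (‖∇(φ·v)‖² + β·(v·Δv − ‖∇v‖²)·φ²) dx > 0. Then for every smooth function φ : ℝ² → ℝ with compact support contained in U, ∫_U φ²·‖∇v‖² dx ≤ C(β)·∫_U ‖∇φ‖²·v² dx. -/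
open MeasureTheory Set Manifold

noncomputable section

namespace Stmt5

abbrev E2 := EuclideanSpace ℝ (Fin 2)
def e (i : Fin 2) : E2 := EuclideanSpace.single i (1:ℝ)

lemma gradient_coord (f : E2 → ℝ) (x : E2) (i : Fin 2) :
    gradient f x i = fderiv ℝ f x (e i) := by
  have h : inner (𝕜 := ℝ) (gradient f x) (e i) = fderiv ℝ f x (e i) :=
    InnerProductSpace.toDual_symm_apply
  rw [← h, e, EuclideanSpace.inner_single_right]
  simp

lemma inner_grad (f g : E2 → ℝ) (x : E2) :
    (inner ℝ (gradient f x) (gradient g x) : ℝ)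
      = ∑ i, fderiv ℝ f x (e i) * fderiv ℝ g x (e i) := by
  rw [PiLp.inner_apply]
  refine Finset.sum_congr rfl fun i _ => ?_
  rw [RCLike.inner_apply, gradient_coord, gradient_coord]
  simp [mul_comm]

lemma norm_grad_sq (f : E2 → ℝ) (x : E2) :
    ‖gradient f x‖ ^ 2 = ∑ i, (fderiv ℝ f x (e i)) ^ 2 := by
  rw [← real_inner_self_eq_norm_sq, inner_grad]
  exact Finset.sum_congr rfl fun i _ => (sq _).symm

lemma gradient_eq_toDual (f : E2 → ℝ) (x : E2) :
    gradient f x = (InnerProductSpace.toDual ℝ E2).symm (fderiv ℝ f x) := rfl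

lemma young (s b p q pq : ℝ) (hs : 0 < s) (hb : 0 < b) (hpq : pq ≤ p * q) :
    2 * b * pq ≤ s / 2 * p ^ 2 + (2 * b ^ 2 / s) * q ^ 2 := by
  rw [← sub_nonneg]
  have key : s / 2 * p ^ 2 + (2 * b ^ 2 / s) * q ^ 2 - 2 * b * pq
      = ((s * p - 2 * b * q) ^ 2 + 4 * b * s * (p * q - pq)) / (2 * s) := by
    field_simp
    ring
  rw [key]
  apply div_nonneg _ (by positivity)
  have h1 : 0 ≤ 4 * b * s * (p * q - pq) :=
    mul_nonneg (by positivity) (sub_nonneg.2 hpq)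
  nlinarith [sq_nonneg (s * p - 2 * b * q)]

lemma exists_cutoff {U K : Set E2} (hU : IsOpen U) (hK : IsCompact K) (hKU : K ⊆ U) :
    ∃ χ : E2 → ℝ, ContDiff ℝ (⊤ : ℕ∞) χ ∧ HasCompactSupport χ ∧ tsupport χ ⊆ U ∧
      ∃ N, IsOpen N ∧ K ⊆ N ∧ EqOn χ 1 N := by
  obtain ⟨t, ht_cpt, hKt, htU⟩ := exists_compact_between hK hU hKU
  obtain ⟨f, hf1, hf0, -⟩ :=
    exists_contMDiffMap_one_nhds_of_subset_interior (𝓘(ℝ, E2)) (n := (⊤ : ℕ∞)) hK.isClosed hKt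
  obtain ⟨N, hNopen, hKN, hfN⟩ := eventually_nhdsSet_iff_exists.mp hf1
  have hsupp : tsupport (⇑f) ⊆ t :=
    closure_minimal (fun x hx => by
      by_contra hxt
      exact hx (hf0 x hxt)) ht_cpt.isClosed
  exact ⟨f, contMDiff_iff_contDiff.mp f.contMDiff,
    show HasCompactSupport (⇑f) from ht_cpt.of_isClosed_subset (isClosed_tsupport _) hsupp,
    hsupp.trans htU, N, hNopen, hKN, hfN⟩

lemma intg {a b : E2 → ℝ} (ha : Continuous a) (hb : Continuous b)
    (hbs : HasCompactSupport b) : Integrable (fun x => a x * b x) :=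
  (ha.mul hb).integrable_of_hasCompactSupport hbs.mul_left

lemma ibp (w g : E2 → ℝ) (hw : ContDiff ℝ 2 w) (hws : HasCompactSupport w)
    (hg : ContDiff ℝ 2 g) (hgs : HasCompactSupport g) :
    ∫ x, eLaplacian w x * g x
      = - ∫ x, (∑ i, fderiv ℝ w x (e i) * fderiv ℝ g x (e i)) := by
  classical
  set F : Fin 2 → E2 → ℝ := fun i y => fderiv ℝ w y (e i) with hFdef
  have hF : ∀ i, ContDiff ℝ 1 (F i) := fun i =>
    (ContinuousLinearMap.apply ℝ ℝ (e i)).contDiff.comp (hw.fderiv_right (by norm_num))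
  have hFs : ∀ i, HasCompactSupport (F i) := fun i =>
    (hws.fderiv ℝ).comp_left (g := fun L : E2 →L[ℝ] ℝ => L (e i)) rfl
  have hFc : ∀ i, Continuous (F i) := fun i => (hF i).continuous
  have hF'c : ∀ i, Continuous (fun x => fderiv ℝ (F i) x (e i)) := fun i =>
    ((hF i).continuous_fderiv one_ne_zero).clm_apply continuous_const
  have hgc : Continuous g := hg.continuous
  have hg'c : ∀ i, Continuous (fun x => fderiv ℝ g x (e i)) := fun i =>
    (hg.continuous_fderiv two_ne_zero).clm_apply continuous_const
  have key : ∀ i, ∫ x, fderiv ℝ (F i) x (e i) * g x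
      = - ∫ x, fderiv ℝ g x (e i) * F i x := by
    intro i
    obtain ⟨C, hC⟩ := ContDiff.lipschitzWith_of_hasCompactSupport (hFs i) (hF i) one_ne_zero
    obtain ⟨D, hD⟩ := ContDiff.lipschitzWith_of_hasCompactSupport hgs hg two_ne_zero
    have h0 := hC.integral_lineDeriv_mul_eq (μ := (volume : Measure E2)) hD hgs (e i)
    have l1 : ∀ x, lineDeriv ℝ (F i) x (e i) = fderiv ℝ (F i) x (e i) := fun x =>
      DifferentiableAt.lineDeriv_eq_fderiv (((hF i).differentiable one_ne_zero) x)
    have l2 : ∀ x, lineDeriv ℝ g x (-(e i)) = -(fderiv ℝ g x (e i)) := by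
      intro x
      rw [DifferentiableAt.lineDeriv_eq_fderiv ((hg.differentiable two_ne_zero) x), map_neg]
    simp only [l1, l2, neg_mul] at h0
    rw [h0, integral_neg]
  have lhs : ∫ x, eLaplacian w x * g x
      = ∑ i, ∫ x, fderiv ℝ (F i) x (e i) * g x := by
    rw [← integral_finset_sum _ (fun i _ => intg (hF'c i) hgc hgs)]
    congr 1
    ext x
    rw [eLaplacian, Finset.sum_mul]
    rfl
  have rhs : ∫ x, (∑ i, fderiv ℝ w x (e i) * fderiv ℝ g x (e i))
      = ∑ i, ∫ x, fderiv ℝ g x (e i) * F i x := by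
    rw [← integral_finset_sum _ (fun i _ => intg (hg'c i) (hFc i) (hFs i))]
    congr 1
    ext x
    exact Finset.sum_congr rfl fun i _ => mul_comm _ _
  rw [lhs, rhs, ← Finset.sum_neg_distrib]
  exact Finset.sum_congr rfl fun i _ => key i

end Stmt5
end

/-- the Caccioppoli-type estimate
`∫ φ² ‖∇v‖² ≤ C(β) ∫ ‖∇φ‖² v²` with `C(β) = (2/(2β−1))·(2(1−β)²/(2β−1)+1)`,
assuming positivity of `∫ (‖∇(φv)‖² + β (vΔv − ‖∇v‖²) φ²)` for all nonzero
smooth compactly supported `φ` in `U`. -/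
theorem stmt_5 (U : Set (EuclideanSpace ℝ (Fin 2))) (hU : IsOpen U)
    (v : EuclideanSpace ℝ (Fin 2) → ℝ) (hv : ContDiffOn ℝ 2 v U)
    (hvpos : ∀ x ∈ U, 0 < v x)
    (β : ℝ) (hβ : β ∈ Set.Ioo (1 / 2 : ℝ) 1)
    (hpos : ∀ φ : EuclideanSpace ℝ (Fin 2) → ℝ, ContDiff ℝ (⊤ : ℕ∞) φ →
      HasCompactSupport φ → tsupport φ ⊆ U → φ ≠ 0 →
      0 < ∫ x in U, (‖gradient (fun y => φ y * v y) x‖ ^ 2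
          + β * (v x * eLaplacian v x - ‖gradient v x‖ ^ 2) * φ x ^ 2))
    (φ : EuclideanSpace ℝ (Fin 2) → ℝ) (hφ : ContDiff ℝ (⊤ : ℕ∞) φ)
    (hφsupp : HasCompactSupport φ) (hφU : tsupport φ ⊆ U) :
    ∫ x in U, φ x ^ 2 * ‖gradient v x‖ ^ 2
      ≤ (2 / (2 * β - 1)) * (2 * (1 - β) ^ 2 / (2 * β - 1) + 1) *
          ∫ x in U, ‖gradient φ x‖ ^ 2 * v x ^ 2 := by
  classical
  obtain ⟨hβ1, hβ2⟩ := hβ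
  have hgrad0 : ∀ f : Stmt5.E2 → ℝ, ∀ x, fderiv ℝ f x = 0 → gradient f x = 0 := by
    intro f x h
    rw [Stmt5.gradient_eq_toDual, h]
    exact map_zero _
  by_cases hφ0 : φ = 0
  · subst hφ0
    have h1 : ∀ x : Stmt5.E2, gradient (0 : Stmt5.E2 → ℝ) x = 0 := fun x =>
      hgrad0 _ x (show fderiv ℝ (fun _ : Stmt5.E2 => (0:ℝ)) x = 0 by
        simp)
    simp only [Pi.zero_apply, ne_eq, zero_pow, h1, norm_zero, mul_zero, zero_mul,
      integral_zero, OfNat.ofNat_ne_zero, not_false_eq_true]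
    simp
  -- setup
  have hφd : Differentiable ℝ φ := hφ.differentiable (by simp)
  have hφ2 : ContDiff ℝ 2 φ := hφ.of_le (by
    rw [show ((2:WithTop ℕ∞)) = (((2:ℕ∞)):WithTop ℕ∞) from rfl, WithTop.coe_le_coe]
    exact le_top)
  obtain ⟨χ, hχ, hχs, hχU, N, hNopen, hKN, hχN⟩ := Stmt5.exists_cutoff hU hφsupp hφU
  set w : Stmt5.E2 → ℝ := fun x => χ x * v x with hwdef
  have hχ2 : ContDiff ℝ 2 χ := hχ.of_le (by
    rw [show ((2:WithTop ℕ∞)) = (((2:ℕ∞)):WithTop ℕ∞) from rfl, WithTop.coe_le_coe]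
    exact le_top)
  have hw2 : ContDiff ℝ 2 w := by
    rw [contDiff_iff_contDiffAt]
    intro x
    by_cases hx : x ∈ U
    · exact (hχ2.contDiffAt).mul (hv.contDiffAt (hU.mem_nhds hx))
    · have hxs : x ∉ tsupport χ := fun h => hx (hχU h)
      have hev : w =ᶠ[nhds x] (fun _ => 0) := by
        filter_upwards [(isClosed_tsupport χ).isOpen_compl.mem_nhds hxs] with y hy
        simp [hwdef, image_eq_zero_of_notMem_tsupport hy]
      exact (contDiffAt_const (c := (0:ℝ))).congr_of_eventuallyEq hev
  have hws : HasCompactSupport w := hχs.mul_right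
  have hwd : Differentiable ℝ w := hw2.differentiable two_ne_zero
  have hw_eq : ∀ x ∈ N, w x = v x := fun x hx => by simp [hwdef, hχN hx]
  have hfd_eq : ∀ x ∈ N, fderiv ℝ w x = fderiv ℝ v x := fun x hx =>
    Filter.EventuallyEq.fderiv_eq
      (Filter.eventuallyEq_of_mem (hNopen.mem_nhds hx) hw_eq)
  have hgrad_eq : ∀ x ∈ N, gradient w x = gradient v x := fun x hx => by
    rw [Stmt5.gradient_eq_toDual, Stmt5.gradient_eq_toDual, hfd_eq x hx]
  have hlap_eq : ∀ x ∈ N, eLaplacian w x = eLaplacian v x := by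
    intro x hx
    unfold eLaplacian
    refine Finset.sum_congr rfl fun i _ => ?_
    have hev : (fun y => fderiv ℝ w y (EuclideanSpace.single i 1))
        =ᶠ[nhds x] (fun y => fderiv ℝ v y (EuclideanSpace.single i 1)) := by
      filter_upwards [hNopen.mem_nhds hx] with y hy
      rw [hfd_eq y hy]
    rw [hev.fderiv_eq]
  have hNU : N ⊆ U := fun x hx => hχU (subset_closure (by
    simp only [Function.mem_support, hχN hx]
    norm_num))
  have hφz : ∀ x, x ∉ tsupport φ → φ x = 0 := fun x hx => image_eq_zero_of_notMem_tsupport hx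
  have hdφz : ∀ x, x ∉ tsupport φ → fderiv ℝ φ x = 0 := by
    intro x hx
    by_contra h
    exact hx (support_fderiv_subset ℝ (Function.mem_support.mpr h))
  have hgφz : ∀ x, x ∉ tsupport φ → gradient φ x = 0 := fun x hx => hgrad0 _ x (hdφz x hx)
  have hvd : ∀ x ∈ U, DifferentiableAt ℝ v x := fun x hx =>
    (hv.contDiffAt (hU.mem_nhds hx)).differentiableAt two_ne_zero
  -- the four integrands
  set A1 : Stmt5.E2 → ℝ := fun x => φ x ^ 2 * ‖gradient w x‖ ^ 2 with hA1def
  set A2 : Stmt5.E2 → ℝ := fun x =>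
    φ x * w x * (inner ℝ (gradient φ x) (gradient w x) : ℝ) with hA2def
  set A3 : Stmt5.E2 → ℝ := fun x => ‖gradient φ x‖ ^ 2 * w x ^ 2 with hA3def
  set A4 : Stmt5.E2 → ℝ := fun x => eLaplacian w x * (φ x * φ x * w x) with hA4def
  -- continuity facts
  have hgradw_cont : Continuous (fun x => gradient w x) := by
    have : Continuous (fderiv ℝ w) := hw2.continuous_fderiv two_ne_zero
    exact ((InnerProductSpace.toDual ℝ Stmt5.E2).symm.continuous.comp this :)
  have hgradφ_cont : Continuous (fun x => gradient φ x) := by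
    have : Continuous (fderiv ℝ φ) := hφ2.continuous_fderiv two_ne_zero
    exact ((InnerProductSpace.toDual ℝ Stmt5.E2).symm.continuous.comp this :)
  have hlapw_cont : Continuous (fun x => eLaplacian w x) := by
    unfold eLaplacian
    refine continuous_finset_sum _ fun i _ => ?_
    have h1 : ContDiff ℝ 1 (fun y => fderiv ℝ w y (EuclideanSpace.single i 1)) :=
      (ContinuousLinearMap.apply ℝ ℝ (EuclideanSpace.single i 1 : Stmt5.E2)).contDiff.comp
        (hw2.fderiv_right (by norm_num))
    exact (h1.continuous_fderiv one_ne_zero).clm_apply continuous_const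
  have hA1c : Continuous A1 :=
    ((hφ.continuous.pow 2).mul (hgradw_cont.norm.pow 2))
  have hA2c : Continuous A2 :=
    ((hφ.continuous.mul hw2.continuous).mul (hgradφ_cont.inner hgradw_cont))
  have hA3c : Continuous A3 :=
    ((hgradφ_cont.norm.pow 2).mul (hw2.continuous.pow 2))
  have hA4c : Continuous A4 :=
    (hlapw_cont.mul ((hφ.continuous.mul hφ.continuous).mul hw2.continuous))
  -- compact support
  have hA1s : HasCompactSupport A1 := HasCompactSupport.intro hφsupp
    (fun x hx => by simp [hA1def, hφz x hx])
  have hA2s : HasCompactSupport A2 := HasCompactSupport.intro hφsupp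
    (fun x hx => by simp [hA2def, hφz x hx])
  have hA3s : HasCompactSupport A3 := HasCompactSupport.intro hφsupp
    (fun x hx => by simp [hA3def, hgφz x hx])
  have hA4s : HasCompactSupport A4 := HasCompactSupport.intro hφsupp
    (fun x hx => by simp [hA4def, hφz x hx])
  have iA1 : Integrable A1 := hA1c.integrable_of_hasCompactSupport hA1s
  have iA2 : Integrable A2 := hA2c.integrable_of_hasCompactSupport hA2s
  have iA3 : Integrable A3 := hA3c.integrable_of_hasCompactSupport hA3s
  have iA4 : Integrable A4 := hA4c.integrable_of_hasCompactSupport hA4s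
  set I1 := ∫ x, A1 x with hI1def
  set I2 := ∫ x, A2 x with hI2def
  set I3 := ∫ x, A3 x with hI3def
  set I4 := ∫ x, A4 x with hI4def
  -- LHS and RHS as global integrals
  have hLHS : ∫ x in U, φ x ^ 2 * ‖gradient v x‖ ^ 2 = I1 := by
    rw [hI1def, ← setIntegral_eq_integral_of_forall_compl_eq_zero (s := U) (f := A1)
      (fun x hx => by simp [hA1def, hφz x (fun h => hx (hφU h))])]
    refine setIntegral_congr_fun hU.measurableSet fun x hx => ?_
    by_cases hxφ : φ x = 0
    · simp [hA1def, hxφ]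
    · have hxN : x ∈ N := hKN (subset_closure hxφ)
      simp [hA1def, hgrad_eq x hxN]
  have hRHS : ∫ x in U, ‖gradient φ x‖ ^ 2 * v x ^ 2 = I3 := by
    rw [hI3def, ← setIntegral_eq_integral_of_forall_compl_eq_zero (s := U) (f := A3)
      (fun x hx => by simp [hA3def, hgφz x (fun h => hx (hφU h))])]
    refine setIntegral_congr_fun hU.measurableSet fun x hx => ?_
    by_cases hxφ : x ∈ tsupport φ
    · simp [hA3def, hw_eq x (hKN hxφ)]
    · simp [hA3def, hgφz x hxφ]
  rw [hLHS, hRHS]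
  -- stability inequality rewritten
  have hstab := hpos φ hφ hφsupp hφU hφ0
  have hstab_eq : ∫ x in U, (‖gradient (fun y => φ y * v y) x‖ ^ 2
        + β * (v x * eLaplacian v x - ‖gradient v x‖ ^ 2) * φ x ^ 2)
      = ∫ x, (A1 x + 2 * A2 x + A3 x + β * (A4 x - A1 x)) := by
    rw [← setIntegral_eq_integral_of_forall_compl_eq_zero (s := U)
      (f := fun x => A1 x + 2 * A2 x + A3 x + β * (A4 x - A1 x))
      (fun x hx => by
        have hxφ : x ∉ tsupport φ := fun h => hx (hφU h)
        simp [hA1def, hA2def, hA3def, hA4def, hφz x hxφ, hgφz x hxφ])]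
    refine setIntegral_congr_fun hU.measurableSet fun x hx => ?_
    by_cases hxφ : x ∈ tsupport φ
    · have hxN : x ∈ N := hKN hxφ
      have hmul : fderiv ℝ (fun y => φ y * v y) x
          = φ x • fderiv ℝ v x + v x • fderiv ℝ φ x := fderiv_mul (hφd x) (hvd x hx)
      simp only [hA1def, hA2def, hA3def, hA4def, Stmt5.norm_grad_sq, Stmt5.inner_grad,
        hfd_eq x hxN, hw_eq x hxN, hlap_eq x hxN, hmul]
      simp only [ContinuousLinearMap.add_apply, ContinuousLinearMap.coe_smul',
        Pi.smul_apply, smul_eq_mul, Fin.sum_univ_two]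
      ring
    · have h0 : φ x = 0 := hφz x hxφ
      have hd0 : fderiv ℝ φ x = 0 := hdφz x hxφ
      have hmul : fderiv ℝ (fun y => φ y * v y) x
          = φ x • fderiv ℝ v x + v x • fderiv ℝ φ x := fderiv_mul (hφd x) (hvd x hx)
      simp only [hA1def, hA2def, hA3def, hA4def, Stmt5.norm_grad_sq, Stmt5.inner_grad,
        hmul, h0, hd0]
      simp only [ContinuousLinearMap.add_apply, ContinuousLinearMap.coe_smul',
        Pi.smul_apply, smul_eq_mul, Fin.sum_univ_two, ContinuousLinearMap.zero_apply]
      ring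
  have hsplit : ∫ x, (A1 x + 2 * A2 x + A3 x + β * (A4 x - A1 x))
      = I1 + 2 * I2 + I3 + β * (I4 - I1) := by
    have i2 : Integrable (fun x : Stmt5.E2 => 2 * A2 x) := by exact iA2.const_mul 2
    have i12 : Integrable (fun x : Stmt5.E2 => A1 x + 2 * A2 x) := by exact iA1.add i2
    have i123 : Integrable (fun x : Stmt5.E2 => A1 x + 2 * A2 x + A3 x) := by exact i12.add iA3
    have i4 : Integrable (fun x : Stmt5.E2 => β * (A4 x - A1 x)) := by
      exact (iA4.sub iA1).const_mul β
    rw [integral_add i123 i4, integral_add i12 iA3, integral_add iA1 i2,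
      integral_const_mul, integral_const_mul, integral_sub iA4 iA1]
  rw [hstab_eq, hsplit] at hstab
  -- integration by parts : I4 = -(I1 + 2 I2)
  have hg2 : ContDiff ℝ 2 (fun x => φ x * φ x * w x) := (hφ2.mul hφ2).mul hw2
  have hgs : HasCompactSupport (fun x => φ x * φ x * w x) := HasCompactSupport.intro hφsupp
    (fun x hx => by simp [hφz x hx])
  have hibp := Stmt5.ibp w (fun x => φ x * φ x * w x) hw2 hws hg2 hgs
  have hibp_rhs : (fun x => ∑ i, fderiv ℝ w x (Stmt5.e i)
        * fderiv ℝ (fun y => φ y * φ y * w y) x (Stmt5.e i))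
      = fun x => A1 x + 2 * A2 x := by
    funext x
    have hmul : fderiv ℝ (fun y => φ y * φ y * w y) x
        = (φ x * φ x) • fderiv ℝ w x + w x • fderiv ℝ (fun y => φ y * φ y) x :=
      fderiv_mul ((hφd x).mul (hφd x)) (hwd x)
    have hmul2 : fderiv ℝ (fun y => φ y * φ y) x
        = φ x • fderiv ℝ φ x + φ x • fderiv ℝ φ x := fderiv_mul (hφd x) (hφd x)
    simp only [hA1def, hA2def, Stmt5.norm_grad_sq, Stmt5.inner_grad, hmul, hmul2]
    simp only [ContinuousLinearMap.add_apply, ContinuousLinearMap.coe_smul',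
      Pi.smul_apply, smul_eq_mul, Fin.sum_univ_two]
    ring
  have hIBP : I4 = -(I1 + 2 * I2) := by
    have : I4 = ∫ x, eLaplacian w x * (φ x * φ x * w x) := by rw [hI4def]
    have i2 : Integrable (fun x : Stmt5.E2 => 2 * A2 x) := by exact iA2.const_mul 2
    rw [this, hibp, hibp_rhs, integral_add iA1 i2, integral_const_mul]
  -- Young / Cauchy-Schwarz bound
  set s : ℝ := 2 * β - 1 with hsdef
  have hs : 0 < s := by rw [hsdef]; linarith
  have hb : 0 < 1 - β := by linarith
  have hptwise : ∀ x, 2 * (1 - β) * A2 x ≤ s / 2 * A1 x + (2 * (1 - β) ^ 2 / s) * A3 x := by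
    intro x
    have hpq : A2 x ≤ (|φ x| * ‖gradient w x‖) * (|w x| * ‖gradient φ x‖) := by
      have h1 : |(inner ℝ (gradient φ x) (gradient w x) : ℝ)|
          ≤ ‖gradient φ x‖ * ‖gradient w x‖ := abs_real_inner_le_norm _ _
      calc A2 x ≤ |A2 x| := le_abs_self _
        _ = |φ x * w x| * |(inner ℝ (gradient φ x) (gradient w x) : ℝ)| := by
            rw [hA2def]; exact abs_mul _ _
        _ ≤ |φ x * w x| * (‖gradient φ x‖ * ‖gradient w x‖) :=
            mul_le_mul_of_nonneg_left h1 (abs_nonneg _)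
        _ = (|φ x| * ‖gradient w x‖) * (|w x| * ‖gradient φ x‖) := by
            rw [abs_mul]; ring
    have := Stmt5.young s (1 - β) (|φ x| * ‖gradient w x‖) (|w x| * ‖gradient φ x‖)
      (A2 x) hs hb hpq
    calc 2 * (1 - β) * A2 x
        ≤ s / 2 * (|φ x| * ‖gradient w x‖) ^ 2
          + 2 * (1 - β) ^ 2 / s * (|w x| * ‖gradient φ x‖) ^ 2 := this
      _ = s / 2 * A1 x + (2 * (1 - β) ^ 2 / s) * A3 x := by
          simp only [hA1def, hA3def, mul_pow, sq_abs]; ring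
  have hI2bound : 2 * (1 - β) * I2 ≤ s / 2 * I1 + (2 * (1 - β) ^ 2 / s) * I3 := by
    have h1 : 2 * (1 - β) * I2 = ∫ x, 2 * (1 - β) * A2 x := (integral_const_mul _ _).symm
    have h2 : s / 2 * I1 + (2 * (1 - β) ^ 2 / s) * I3
        = ∫ x, (s / 2 * A1 x + (2 * (1 - β) ^ 2 / s) * A3 x) := by
      have ia : Integrable (fun x : Stmt5.E2 => s / 2 * A1 x) := by exact iA1.const_mul _
      have ib : Integrable (fun x : Stmt5.E2 => (2 * (1 - β) ^ 2 / s) * A3 x) := by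
        exact iA3.const_mul _
      rw [integral_add ia ib, integral_const_mul, integral_const_mul]
    rw [h1, h2]
    have ia : Integrable (fun x : Stmt5.E2 => 2 * (1 - β) * A2 x) := by exact iA2.const_mul _
    have ib : Integrable (fun x : Stmt5.E2 => s / 2 * A1 x + (2 * (1 - β) ^ 2 / s) * A3 x) := by
      exact (iA1.const_mul _).add (iA3.const_mul _)
    exact integral_mono ia ib hptwise
  -- final arithmetic
  rw [hIBP] at hstab
  have hkey : s / 2 * I1 ≤ (2 * (1 - β) ^ 2 / s + 1) * I3 := by
    have heq : I1 + 2 * I2 + I3 + β * (-(I1 + 2 * I2) - I1)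
        = 2 * (1 - β) * I2 + I3 - s * I1 := by rw [hsdef]; ring
    have h1 : s * I1 < 2 * (1 - β) * I2 + I3 := by linarith [hstab, heq]
    linarith [hI2bound, h1]
  have h2s : (0:ℝ) < 2 / s := by positivity
  have := mul_le_mul_of_nonneg_left hkey h2s.le
  calc I1 = 2 / s * (s / 2 * I1) := by field_simp
    _ ≤ 2 / s * ((2 * (1 - β) ^ 2 / s + 1) * I3) := this
    _ = 2 / (2 * β - 1) * (2 * (1 - β) ^ 2 / (2 * β - 1) + 1) * I3 := by
        rw [hsdef]; ring
end
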